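/- arXiv:1412.1711 — 11 statements merged into one kernel-verified Lean document; each statement's English description precedes it below -/
import Mathlib

section
/- Let (Ω, 𝔄, P) be a probability space, X ∈ L²(P) with E[X] = 0, and r > 0 with 2r < E[|X|]. Then there exist unique real numbers v′ < 0 < v″ such that E[(v′ − X)₊] = r and E[(X − v″)₊] = r, where y₊ = max(y, 0). -/
/-!
The function `v ↦ E[(v - X)₊]` is continuous and nondecreasing, tends to `0` at `-∞`, and is
strictly increasing wherever it is positive. Since `E[X] = 0`, its value at `0` is `E[|X|] / 2 > r`,
so it takes the value `r` exactly once on `(-∞, 0)`. Applying this to `-X` gives `v″`.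
-/

open MeasureTheory Filter Topology

namespace MeasureTheory

variable {Ω : Type*} [MeasurableSpace Ω] {μ : Measure Ω} {X : Ω → ℝ}

noncomputable def lowerPartialMoment (μ : Measure Ω) (X : Ω → ℝ) (v : ℝ) : ℝ :=
  ∫ x, max (v - X x) 0 ∂μ

lemma Integrable.posPart_const_sub [IsFiniteMeasure μ] (hX : Integrable X μ) (v : ℝ) :
    Integrable (fun x => max (v - X x) 0) μ :=
  ((integrable_const v).sub hX).pos_part

lemma lipschitzWith_lowerPartialMoment [IsFiniteMeasure μ] (hX : Integrable X μ) :
    LipschitzWith (measureUnivNNReal μ) (lowerPartialMoment μ X) := by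
  refine LipschitzWith.of_dist_le_mul fun v w => ?_
  rw [Real.dist_eq, Real.dist_eq, lowerPartialMoment, lowerPartialMoment,
    ← integral_sub (hX.posPart_const_sub v) (hX.posPart_const_sub w)]
  calc |∫ x, (max (v - X x) 0 - max (w - X x) 0) ∂μ|
      ≤ ∫ x, |max (v - X x) 0 - max (w - X x) 0| ∂μ := abs_integral_le_integral_abs
    _ ≤ ∫ _, |v - w| ∂μ := by
        refine integral_mono ((hX.posPart_const_sub v).sub (hX.posPart_const_sub w)).abs
          (integrable_const _) fun x => ?_
        simpa using abs_max_sub_max_le_abs (v - X x) (w - X x) 0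
    _ = measureUnivNNReal μ * |v - w| := by
        simp [measureReal_def, measureUnivNNReal, ENNReal.coe_toNNReal_eq_toReal]

lemma tendsto_lowerPartialMoment_atBot [IsFiniteMeasure μ] (hX : Integrable X μ) :
    Tendsto (lowerPartialMoment μ X) atBot (𝓝 0) := by
  rw [← integral_zero Ω ℝ]
  refine tendsto_integral_filter_of_dominated_convergence (fun x => max (0 - X x) 0)
    (Eventually.of_forall fun v => (hX.posPart_const_sub v).aestronglyMeasurable) ?_
    (hX.posPart_const_sub 0) (Eventually.of_forall fun x => ?_)
  · filter_upwards [eventually_le_atBot 0] with v hv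
    refine Eventually.of_forall fun x => ?_
    rw [Real.norm_of_nonneg (le_max_right _ _)]
    exact max_le_max (by linarith) le_rfl
  · refine tendsto_const_nhds.congr' ?_
    filter_upwards [eventually_le_atBot (X x)] with v hv
    exact (max_eq_right (by linarith)).symm

lemma strictMonoOn_lowerPartialMoment [IsFiniteMeasure μ] (hX : Integrable X μ) :
    StrictMonoOn (lowerPartialMoment μ X) {v | 0 < lowerPartialMoment μ X v} := by
  intro v hv w _ hvw
  rw [← sub_pos, lowerPartialMoment, lowerPartialMoment,
    ← integral_sub (hX.posPart_const_sub w) (hX.posPart_const_sub v),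
    integral_pos_iff_support_of_nonneg (fun x => sub_nonneg.2 (max_le_max (by linarith) le_rfl))
      ((hX.posPart_const_sub w).sub (hX.posPart_const_sub v))]
  replace hv : 0 < μ (Function.support fun x => max (v - X x) 0) :=
    (integral_pos_iff_support_of_nonneg (fun x => le_max_right _ _)
      (hX.posPart_const_sub v)).mp hv
  -- wherever `(v - X)₊ > 0`, also `(w - X)₊ - (v - X)₊ = w - v > 0`
  refine hv.trans_le (measure_mono fun x hx => ?_)
  have hXv : X x < v := by
    by_contra! h
    exact hx (max_eq_right (by linarith))
  simp only [Function.mem_support]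
  rw [max_eq_left (by linarith), max_eq_left (by linarith)]
  linarith

lemma existsUnique_lowerPartialMoment_eq [IsFiniteMeasure μ] (hX : Integrable X μ) {r b : ℝ}
    (hr : 0 < r) (hrb : r < lowerPartialMoment μ X b) :
    ∃! v, v < b ∧ lowerPartialMoment μ X v = r := by
  obtain ⟨a, har, hab⟩ :=
    (((tendsto_lowerPartialMoment_atBot hX).eventually_lt_const hr).and
      (eventually_lt_atBot b)).exists
  obtain ⟨v, hv, hvr⟩ := intermediate_value_Icc hab.le
    (lipschitzWith_lowerPartialMoment hX).continuous.continuousOn ⟨har.le, hrb.le⟩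
  have hvb : v < b := hv.2.lt_of_ne fun h => by subst h; linarith
  refine ⟨v, ⟨hvb, hvr⟩, fun w ⟨_, hwr⟩ => ?_⟩
  exact (strictMonoOn_lowerPartialMoment hX).injOn (by simp [hwr, hr]) (by simp [hvr, hr])
    (hwr.trans hvr.symm)

lemma lowerPartialMoment_zero (hX : Integrable X μ) :
    lowerPartialMoment μ X 0 = ((∫ x, |X x| ∂μ) - ∫ x, X x ∂μ) / 2 := by
  have hpointwise : ∀ a : ℝ, max (0 - a) 0 = (|a| - a) / 2 := fun a => by
    rcases le_or_gt a 0 with h | h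
    · rw [abs_of_nonpos h, max_eq_left (by linarith)]; ring
    · rw [abs_of_pos h, max_eq_right (by linarith)]; ring
  simp only [lowerPartialMoment, hpointwise]
  rw [integral_div, integral_sub hX.abs hX]

lemma integral_posPart_sub_eq_lowerPartialMoment_neg (v : ℝ) :
    ∫ x, max (X x - v) 0 ∂μ = lowerPartialMoment μ (-X) (-v) := by
  simp only [lowerPartialMoment, Pi.neg_apply, neg_sub_neg]

end MeasureTheory

open MeasureTheory

/-- existence and uniqueness of the total variation clipping
constants `v′ < 0 < v″` with `E[(v′ − X)₊] = r = E[(X − v″)₊]`, provided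
`2r < E[|X|]`. -/
theorem tv_clipping_constants_exist_unique
    {Ω : Type*} [MeasurableSpace Ω] (P : Measure Ω) [IsProbabilityMeasure P]
    (X : Ω → ℝ) (hX : MemLp X 2 P) (hcent : ∫ x, X x ∂P = 0)
    (r : ℝ) (hr : 0 < r) (hrE : 2 * r < ∫ x, |X x| ∂P) :
    (∃! v' : ℝ, v' < 0 ∧ (∫ x, max (v' - X x) 0 ∂P) = r) ∧
    (∃! v'' : ℝ, 0 < v'' ∧ (∫ x, max (X x - v'') 0 ∂P) = r) := by
  have hXi : Integrable X P := hX.integrable one_le_two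
  constructor
  · refine existsUnique_lowerPartialMoment_eq hXi hr ?_
    rw [lowerPartialMoment_zero hXi, hcent]
    linarith
  · have hneg := existsUnique_lowerPartialMoment_eq (b := 0) hXi.neg hr (by
      rw [lowerPartialMoment_zero hXi.neg]
      simp only [Pi.neg_apply, abs_neg, integral_neg, hcent]
      linarith)
    refine (Equiv.neg ℝ).existsUnique_congr (fun w => ?_) |>.mp hneg
    rw [integral_posPart_sub_eq_lowerPartialMoment_neg]
    simp
end

section
/- Let (Ω, 𝔄, P) be a probability space, X ∈ L²(P) with E[X] = 0, and r > 0. If 2r < E[|X|], let v′ < 0 < v″ be the unique reals with E[(v′ − X)₊] = r = E[(X − v″)₊]; then the metric projection of X onto the total variation tangent ball G_v(r) = {g ∈ L²(P) : E[g] = 0, E[|g|] ≤ 2r} equals X − (v′ ∨ X ∧ v″), i.e. the residual X − π(X) is the clipped function v′ ∨ X ∧ v″ (pointwise max with v′ and min with v″). If instead E[|X|] ≤ 2r, then π(X) = X and the residual is 0. -/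
/-!
Write `c = v′ ∨ X ∧ v″` and `g₀ = X - c = (X - v″)₊ - (v′ - X)₊`. The defining equations of
`v′, v″` make `E[g₀] = 0` and `E[|g₀|] = 2r`, so `g₀ ∈ G_v(r)`, and give `E[c g₀] = (v″ - v′) r`.
Since `c` takes values in `[v′, v″]`, every centred `g` with `E[|g|] ≤ 2r` has
`E[c g] ≤ (v″ - v′) r`, so `⟪X - g₀, g₀ - g⟫ ≥ 0` on `G_v(r)`: this is the variational inequality
characterising `g₀` as the projection of `X`.
-/

open MeasureTheory RealInnerProductSpace

section Clip

variable {v' v'' : ℝ}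

lemma abs_clip_le (a : ℝ) : |max v' (min a v'')| ≤ max |v'| |v''| := by
  grind [abs_le, le_max_iff, le_abs_self, neg_abs_le]

lemma sub_clip_eq (hvv : v' ≤ v'') (a : ℝ) :
    a - max v' (min a v'') = max (a - v'') 0 - max (v' - a) 0 := by
  grind

lemma abs_sub_clip_eq (hvv : v' ≤ v'') (a : ℝ) :
    |a - max v' (min a v'')| = max (a - v'') 0 + max (v' - a) 0 := by
  grind

lemma clip_mul_sub_clip_eq (hvv : v' ≤ v'') (a : ℝ) :
    max v' (min a v'') * (a - max v' (min a v''))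
      = v'' * max (a - v'') 0 - v' * max (v' - a) 0 := by
  grind

end Clip

lemma eq_of_norm_sub_le_of_inner_sub_nonneg {E : Type*} [NormedAddCommGroup E]
    [InnerProductSpace ℝ E] {x y z : E} (hle : ‖x - z‖ ≤ ‖x - y‖) (hinner : 0 ≤ ⟪x - y, y - z⟫) :
    z = y := by
  have hsq : ‖x - z‖ ^ 2 = ‖x - y‖ ^ 2 + 2 * ⟪x - y, y - z⟫ + ‖y - z‖ ^ 2 := by
    rw [← norm_add_sq_real, sub_add_sub_cancel]
  have : ‖y - z‖ ^ 2 ≤ 0 := by nlinarith [norm_nonneg (x - z), norm_nonneg (x - y)]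
  rw [eq_comm, ← sub_eq_zero, ← norm_eq_zero]
  nlinarith [norm_nonneg (y - z)]

lemma integral_mul_le_of_mem_Icc_of_integral_eq_zero {α : Type*} [MeasurableSpace α]
    {μ : Measure α} {c g : α → ℝ} {a b : ℝ} (hc : AEStronglyMeasurable c μ)
    (hcab : ∀ᵐ x ∂μ, c x ∈ Set.Icc a b) (hg : Integrable g μ) (hg0 : ∫ x, g x ∂μ = 0) :
    ∫ x, c x * g x ∂μ ≤ (b - a) / 2 * ∫ x, |g x| ∂μ := by
  set m := (a + b) / 2 with hm
  have hcm : ∀ᵐ x ∂μ, ‖c x - m‖ ≤ (b - a) / 2 := by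
    filter_upwards [hcab] with x ⟨hax, hxb⟩
    rw [Real.norm_eq_abs, abs_le]
    constructor <;> linarith
  have hcmg : Integrable (fun x => (c x - m) * g x) μ :=
    hg.bdd_mul (hc.sub aestronglyMeasurable_const) hcm
  -- `g` is centred, so `c` may be replaced by `c - m`, which is bounded by `(b - a) / 2`.
  have hshift : ∫ x, c x * g x ∂μ = ∫ x, (c x - m) * g x ∂μ := by
    have : (fun x => c x * g x) = fun x => (c x - m) * g x + m * g x := by
      funext x; ring
    rw [this, integral_add hcmg (hg.const_mul m), integral_const_mul, hg0, mul_zero, add_zero]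
  calc ∫ x, c x * g x ∂μ = ∫ x, (c x - m) * g x ∂μ := hshift
    _ ≤ ∫ x, |(c x - m) * g x| ∂μ := integral_mono hcmg hcmg.abs fun x => le_abs_self _
    _ ≤ ∫ x, (b - a) / 2 * |g x| ∂μ := by
      refine integral_mono_ae hcmg.abs (hg.abs.const_mul _) ?_
      filter_upwards [hcm] with x hx
      rw [abs_mul]
      exact mul_le_mul_of_nonneg_right hx (abs_nonneg _)
    _ = (b - a) / 2 * ∫ x, |g x| ∂μ := integral_const_mul _ _

lemma MeasureTheory.L2.real_inner_eq_integral_mul {α : Type*} [MeasurableSpace α] {μ : Measure α}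
    (f g : Lp ℝ 2 μ) : ⟪f, g⟫ = ∫ x, f x * g x ∂μ := by
  simp only [L2.inner_def, RCLike.inner_apply, conj_trivial, mul_comm]

namespace MeasureTheory.Lp

variable {α : Type*} [MeasurableSpace α] {μ : Measure α} [IsFiniteMeasure μ]
  {v' v'' : ℝ} {f : Lp ℝ 2 μ}

lemma memLp_clip (v' v'' : ℝ) (f : Lp ℝ 2 μ) : MemLp (fun x => max v' (min (f x) v'')) 2 μ :=
  MemLp.of_bound
    ((continuous_const.max (continuous_id.min continuous_const)).comp_aestronglyMeasurable
      (Lp.aestronglyMeasurable f)) _ (Filter.Eventually.of_forall fun _ => abs_clip_le _)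

noncomputable def clip (v' v'' : ℝ) (f : Lp ℝ 2 μ) : Lp ℝ 2 μ := (memLp_clip v' v'' f).toLp _

lemma coeFn_clip : clip v' v'' f =ᵐ[μ] fun x => max v' (min (f x) v'') :=
  (memLp_clip v' v'' f).coeFn_toLp

lemma coeFn_sub_clip : ⇑(f - clip v' v'' f) =ᵐ[μ] fun x => f x - max v' (min (f x) v'') := by
  filter_upwards [Lp.coeFn_sub f (clip v' v'' f), coeFn_clip] with x h1 h2
  rw [h1, Pi.sub_apply, h2]

variable (hvv : v' ≤ v'')
include hvv

lemma integral_sub_clip :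
    ∫ x, (f - clip v' v'' f) x ∂μ = ∫ x, max (f x - v'') 0 ∂μ - ∫ x, max (v' - f x) 0 ∂μ := by
  have hf := (Lp.memLp f).integrable one_le_two
  rw [integral_congr_ae coeFn_sub_clip]
  simp_rw [sub_clip_eq hvv]
  exact integral_sub (hf.sub (integrable_const _)).pos_part ((integrable_const _).sub hf).pos_part

lemma integral_abs_sub_clip :
    ∫ x, |(f - clip v' v'' f) x| ∂μ = ∫ x, max (f x - v'') 0 ∂μ + ∫ x, max (v' - f x) 0 ∂μ := by
  have hf := (Lp.memLp f).integrable one_le_two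
  have habs : (fun x => |(f - clip v' v'' f) x|) =ᵐ[μ]
      fun x => |f x - max v' (min (f x) v'')| := coeFn_sub_clip.fun_comp abs
  rw [integral_congr_ae habs]
  simp_rw [abs_sub_clip_eq hvv]
  exact integral_add (hf.sub (integrable_const _)).pos_part ((integrable_const _).sub hf).pos_part

lemma inner_clip_sub_clip :
    ⟪clip v' v'' f, f - clip v' v'' f⟫
      = v'' * ∫ x, max (f x - v'') 0 ∂μ - v' * ∫ x, max (v' - f x) 0 ∂μ := by
  have hf := (Lp.memLp f).integrable one_le_two
  have h'' : Integrable (fun x => max (f x - v'') 0) μ := (hf.sub (integrable_const _)).pos_part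
  have h' : Integrable (fun x => max (v' - f x) 0) μ := ((integrable_const _).sub hf).pos_part
  have hmul : (fun x => clip v' v'' f x * (f - clip v' v'' f) x) =ᵐ[μ]
      fun x => max v' (min (f x) v'') * (f x - max v' (min (f x) v'')) := by
    filter_upwards [coeFn_clip, coeFn_sub_clip] with x h1 h2
    rw [h1, h2]
  rw [L2.real_inner_eq_integral_mul, integral_congr_ae hmul]
  simp_rw [clip_mul_sub_clip_eq hvv]
  rw [integral_sub (h''.const_mul _) (h'.const_mul _), integral_const_mul, integral_const_mul]

lemma inner_clip_le (g : Lp ℝ 2 μ) (hg0 : ∫ x, g x ∂μ = 0) :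
    ⟪clip v' v'' f, g⟫ ≤ (v'' - v') / 2 * ∫ x, |g x| ∂μ := by
  rw [L2.real_inner_eq_integral_mul]
  exact integral_mul_le_of_mem_Icc_of_integral_eq_zero (Lp.aestronglyMeasurable _)
    (coeFn_clip.mono fun x hx => hx ▸ ⟨le_max_left _ _, max_le hvv (min_le_right _ _)⟩)
    ((Lp.memLp g).integrable one_le_two) hg0

end MeasureTheory.Lp

theorem tv_projection_residual_is_clipped_general
    {Ω : Type*} [MeasurableSpace Ω] (P : Measure Ω) [IsProbabilityMeasure P]
    (r : ℝ)
    (X : Lp ℝ 2 P) (hcent : ∫ x, X x ∂P = 0)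
    (G : Set (Lp ℝ 2 P))
    (hG : G = {g : Lp ℝ 2 P | (∫ x, g x ∂P) = 0 ∧ (∫ x, |g x| ∂P) ≤ 2 * r})
    (p : Lp ℝ 2 P) (hpG : p ∈ G) (hpmin : ∀ g ∈ G, ‖X - p‖ ≤ ‖X - g‖) :
    (∀ v' v'' : ℝ, v' < 0 → 0 < v'' →
      (∫ x, max (v' - X x) 0 ∂P) = r → (∫ x, max (X x - v'') 0 ∂P) = r →
      2 * r < (∫ x, |X x| ∂P) →
      (fun x => X x - p x) =ᵐ[P] fun x => max v' (min (X x) v'')) ∧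
    ((∫ x, |X x| ∂P) ≤ 2 * r → p = X) := by
  subst hG
  refine ⟨fun v' v'' hv' hv'' hr' hr'' _ => ?_, fun hX => ?_⟩
  · have hvv : v' ≤ v'' := by linarith
    set c := Lp.clip v' v'' X
    have hresG : X - c ∈ {g : Lp ℝ 2 P | (∫ x, g x ∂P) = 0 ∧ (∫ x, |g x| ∂P) ≤ 2 * r} :=
      ⟨by rw [Lp.integral_sub_clip hvv, hr', hr'', sub_self],
        by rw [Lp.integral_abs_sub_clip hvv, hr', hr'', two_mul]⟩
    have hinner : 0 ≤ ⟪X - (X - c), (X - c) - p⟫ := by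
      have hcp : ⟪c, p⟫ ≤ (v'' - v') / 2 * (2 * r) :=
        (Lp.inner_clip_le hvv p hpG.1).trans (mul_le_mul_of_nonneg_left hpG.2 (by linarith))
      rw [sub_sub_cancel, inner_sub_right, Lp.inner_clip_sub_clip hvv, hr', hr'']
      linarith
    have hp : p = X - c := eq_of_norm_sub_le_of_inner_sub_nonneg (hpmin _ hresG) hinner
    filter_upwards [hp ▸ Lp.coeFn_sub_clip] with x hx
    rw [hx, sub_sub_cancel]
  · have h := hpmin X ⟨hcent, hX⟩
    rw [sub_self, norm_zero, norm_le_zero_iff, sub_eq_zero] at h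
    exact h.symm

/-- the metric projection `p` of `X` onto the total variation
tangent ball `G_v(r) = {g ∈ L²(P) : E[g] = 0, E[|g|] ≤ 2r}` has residual
`X - p = v′ ∨ X ∧ v″` when `2r < E[|X|]` (with `v′, v″` the clipping
constants), and `p = X` when `E[|X|] ≤ 2r`. -/
theorem tv_projection_residual_is_clipped
    {Ω : Type*} [MeasurableSpace Ω] (P : Measure Ω) [IsProbabilityMeasure P]
    (r : ℝ) (hr : 0 < r)
    (X : Lp ℝ 2 P) (hcent : ∫ x, X x ∂P = 0)
    (G : Set (Lp ℝ 2 P))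
    (hG : G = {g : Lp ℝ 2 P | (∫ x, g x ∂P) = 0 ∧ (∫ x, |g x| ∂P) ≤ 2 * r})
    (p : Lp ℝ 2 P) (hpG : p ∈ G) (hpmin : ∀ g ∈ G, ‖X - p‖ ≤ ‖X - g‖) :
    (∀ v' v'' : ℝ, v' < 0 → 0 < v'' →
      (∫ x, max (v' - X x) 0 ∂P) = r → (∫ x, max (X x - v'') 0 ∂P) = r →
      2 * r < (∫ x, |X x| ∂P) →
      (fun x => X x - p x) =ᵐ[P] fun x => max v' (min (X x) v'')) ∧
    ((∫ x, |X x| ∂P) ≤ 2 * r → p = X) :=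
  tv_projection_residual_is_clipped_general P r X hcent G hG p hpG hpmin
end

section
/- Let (Ω, 𝔄, P) be a probability space, X ∈ L²(P) with E[X] = 0, and 0 < 2r < E[|X|]. Let v′ < 0 < v″ be the unique reals with E[(v′ − X)₊] = r = E[(X − v″)₊], and set X⁽ᵛ⁾ = v′ ∨ X ∧ v″. Then E[X⁽ᵛ⁾ X] = E[(X⁽ᵛ⁾)²] + r(v″ − v′), and in particular E[X⁽ᵛ⁾ X] > 0. -/
open MeasureTheory

/-!
For `a ≤ b` and `c = a ∨ x ∧ b` one has `c x = c² + b (x − b)₊ − a (a − x)₊` pointwise (check the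
three pieces `x ≤ a`, `a ≤ x ≤ b`, `b ≤ x`). Integrating, both tail expectations equal `r`, and the
remaining term `r (v″ − v′)` is positive.
-/

lemma clip_mul_self_eq {a b : ℝ} (hab : a ≤ b) (x : ℝ) :
    max a (min x b) * x = max a (min x b) ^ 2 + b * max (x - b) 0 - a * max (a - x) 0 := by
  rcases le_total x a with h | h <;> rcases le_total x b with h' | h' <;>
    simp only [max_def, min_def] <;> split_ifs <;> nlinarith

lemma abs_clip_le_s3 {a b : ℝ} (hab : a ≤ b) (x : ℝ) : |max a (min x b)| ≤ max |a| |b| :=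
  abs_le_max_abs_abs (le_max_left _ _) (max_le hab (min_le_right _ _))

section Integral

variable {Ω : Type*} [MeasurableSpace Ω] {μ : Measure Ω} {X : Ω → ℝ} {a b : ℝ}

lemma integral_clip_mul_self [IsFiniteMeasure μ] (hX : Integrable X μ) (hab : a ≤ b) :
    ∫ x, max a (min (X x) b) * X x ∂μ =
      ∫ x, max a (min (X x) b) ^ 2 ∂μ + b * ∫ x, max (X x - b) 0 ∂μ
        - a * ∫ x, max (a - X x) 0 ∂μ := by
  have hmeas : AEStronglyMeasurable (fun x ↦ max a (min (X x) b)) μ :=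
    aestronglyMeasurable_const.sup (hX.aestronglyMeasurable.inf aestronglyMeasurable_const)
  have hbound : ∀ᵐ x ∂μ, ‖max a (min (X x) b)‖ ≤ max |a| |b| :=
    .of_forall fun x ↦ abs_clip_le_s3 hab (X x)
  have hsq : Integrable (fun x ↦ max a (min (X x) b) ^ 2) μ := by
    simpa only [sq] using (Integrable.of_bound hmeas _ hbound).bdd_mul hmeas hbound
  have hupper : Integrable (fun x ↦ max (X x - b) 0) μ := (hX.sub (integrable_const b)).pos_part
  have hlower : Integrable (fun x ↦ max (a - X x) 0) μ := ((integrable_const a).sub hX).pos_part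
  simp_rw [clip_mul_self_eq hab]
  rw [integral_sub (by exact hsq.add (hupper.const_mul b)) (hlower.const_mul a),
    integral_add hsq (hupper.const_mul b), integral_const_mul, integral_const_mul]

end Integral

theorem tv_clipped_scores_inner_product_general
    {Ω : Type*} [MeasurableSpace Ω] (P : Measure Ω) [IsProbabilityMeasure P]
    (X : Ω → ℝ) (hX : MemLp X 2 P)
    (r : ℝ) (hr : 0 < r)
    (v' v'' : ℝ) (hv' : v' < 0) (hv'' : 0 < v'')
    (hv'eq : (∫ x, max (v' - X x) 0 ∂P) = r)
    (hv''eq : (∫ x, max (X x - v'') 0 ∂P) = r)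
    (Xv : Ω → ℝ) (hXv : Xv = fun x => max v' (min (X x) v'')) :
    (∫ x, Xv x * X x ∂P) = (∫ x, (Xv x) ^ 2 ∂P) + r * (v'' - v') ∧
    0 < ∫ x, Xv x * X x ∂P := by
  subst hXv
  have hv : v' < v'' := hv'.trans hv''
  have hinner : ∫ x, max v' (min (X x) v'') * X x ∂P =
      ∫ x, max v' (min (X x) v'') ^ 2 ∂P + r * (v'' - v') := by
    rw [integral_clip_mul_self (hX.integrable one_le_two) hv.le, hv'eq, hv''eq]
    ring
  refine ⟨hinner, ?_⟩
  rw [hinner]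
  have hsq : 0 ≤ ∫ x, max v' (min (X x) v'') ^ 2 ∂P := integral_nonneg fun _ ↦ sq_nonneg _
  linarith [mul_pos hr (sub_pos.2 hv)]

/-- for the clipped scores `X⁽ᵛ⁾ = v′ ∨ X ∧ v″` in the total
variation model, `E[X⁽ᵛ⁾ X] = E[(X⁽ᵛ⁾)²] + r(v″ − v′)`, and `E[X⁽ᵛ⁾ X] > 0`. -/
theorem tv_clipped_scores_inner_product
    {Ω : Type*} [MeasurableSpace Ω] (P : Measure Ω) [IsProbabilityMeasure P]
    (X : Ω → ℝ) (hX : MemLp X 2 P) (hcent : ∫ x, X x ∂P = 0)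
    (r : ℝ) (hr : 0 < r) (hrE : 2 * r < ∫ x, |X x| ∂P)
    (v' v'' : ℝ) (hv' : v' < 0) (hv'' : 0 < v'')
    (hv'eq : (∫ x, max (v' - X x) 0 ∂P) = r)
    (hv''eq : (∫ x, max (X x - v'') 0 ∂P) = r)
    (Xv : Ω → ℝ) (hXv : Xv = fun x => max v' (min (X x) v'')) :
    (∫ x, Xv x * X x ∂P) = (∫ x, (Xv x) ^ 2 ∂P) + r * (v'' - v') ∧
    0 < ∫ x, Xv x * X x ∂P :=
  tv_clipped_scores_inner_product_general P X hX r hr v' v'' hv' hv'' hv'eq hv''eq Xv hXv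
end

section
/- Let (Ω, 𝔄, P) be a probability space, X ∈ L²(P) with E[X] = 0, and 0 < r < −essinf_P X (where essinf_P X denotes the P-essential infimum of X). Then there exists a unique u > 0 such that E[(X + r) ∧ u] = 0, where ∧ denotes pointwise minimum. -/
/-!
Put `Y = X + r` and `F u = E[Y ∧ u]`. Then `F` is `1`-Lipschitz, `F 0 = -E[Y⁻] < 0` because
`Y < 0` with positive probability (this is `r < -essinf X`), `F u ≤ u + F 0` for `u ≥ 0`, and
`F u → E[Y] = r > 0` as `u → ∞`; the intermediate value theorem gives a zero of `F` in `(0, ∞)`.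
If `a < b` and `F a = F b`, then `Y ≤ a` almost surely, so `F a = E[Y] > 0`; hence `F` is strictly
increasing where it is below `E[Y]`, and the zero is unique.
-/

open MeasureTheory Filter Topology

namespace MeasureTheory

variable {Ω : Type*} [MeasurableSpace Ω] {μ : Measure Ω} {Y : Ω → ℝ}

theorem Integrable.min_const [IsFiniteMeasure μ] (hY : Integrable Y μ) (u : ℝ) :
    Integrable (fun x => min (Y x) u) μ :=
  hY.inf (integrable_const u)

theorem isCoboundedUnder_ge_ae_of_integrable [IsProbabilityMeasure μ] (hY : Integrable Y μ) :
    IsCoboundedUnder (· ≥ ·) (ae μ) Y :=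
  ⟨∫ x, Y x ∂μ, fun a ha => by simpa using integral_mono_ae (integrable_const a) hY ha⟩

theorem lipschitzWith_integral_min_const [IsProbabilityMeasure μ] (hY : Integrable Y μ) :
    LipschitzWith 1 fun u => ∫ x, min (Y x) u ∂μ := by
  refine LipschitzWith.of_dist_le_mul fun u v => ?_
  rw [NNReal.coe_one, one_mul, dist_eq_norm, ← integral_sub (hY.min_const u) (hY.min_const v)]
  simpa using norm_integral_le_of_norm_le_const (μ := μ) (C := dist u v)
    (f := fun x => min (Y x) u - min (Y x) v) <|
    Eventually.of_forall fun x => by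
      simpa [Real.dist_eq] using abs_min_sub_min_le_max (Y x) u (Y x) v

theorem tendsto_integral_min_const_atTop [IsFiniteMeasure μ] (hY : Integrable Y μ) :
    Tendsto (fun u => ∫ x, min (Y x) u ∂μ) atTop (𝓝 (∫ x, Y x ∂μ)) := by
  refine tendsto_integral_filter_of_dominated_convergence (fun x => |Y x|)
    (Eventually.of_forall fun u => (hY.min_const u).aestronglyMeasurable) ?_ hY.abs ?_
  · filter_upwards [eventually_ge_atTop 0] with u hu
    refine Eventually.of_forall fun x => abs_le.2 ⟨?_, (min_le_left _ _).trans (le_abs_self _)⟩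
    exact le_min (neg_abs_le _) ((neg_nonpos.2 (abs_nonneg _)).trans hu)
  · refine Eventually.of_forall fun x => tendsto_const_nhds.congr' ?_
    filter_upwards [eventually_ge_atTop (Y x)] with u hu
    exact (min_eq_left hu).symm

theorem integral_min_const_le_add [IsProbabilityMeasure μ] (hY : Integrable Y μ) {u : ℝ}
    (hu : 0 ≤ u) : ∫ x, min (Y x) u ∂μ ≤ u + ∫ x, min (Y x) 0 ∂μ := by
  calc ∫ x, min (Y x) u ∂μ ≤ ∫ x, (u + min (Y x) 0) ∂μ := by
        refine integral_mono (hY.min_const u) ((integrable_const u).add (hY.min_const 0)) fun x => ?_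
        rcases le_total (Y x) 0 with h | h
        · rw [min_eq_left h, min_eq_left (h.trans hu)]
          linarith
        · rw [min_eq_right h]
          linarith [min_le_right (Y x) u]
    _ = u + ∫ x, min (Y x) 0 ∂μ := by simp [integral_add (integrable_const u) (hY.min_const 0)]

theorem integral_min_zero_neg [IsFiniteMeasure μ] (hY : Integrable Y μ) (hneg : ¬ 0 ≤ᵐ[μ] Y) :
    ∫ x, min (Y x) 0 ∂μ < 0 := by
  refine (integral_nonpos fun x => min_le_right _ 0).lt_of_ne fun hzero => hneg ?_
  have hneg_part : (fun x => -min (Y x) 0) =ᵐ[μ] 0 :=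
    (integral_eq_zero_iff_of_nonneg (fun x => neg_nonneg.2 (min_le_right _ _))
      (hY.min_const 0).neg).1 (by rw [integral_neg, hzero, neg_zero])
  filter_upwards [hneg_part] with x hx
  simpa using hx

theorem integral_min_const_lt_integral_min_const [IsFiniteMeasure μ] (hY : Integrable Y μ)
    {a b : ℝ} (hab : a < b) (ha : ∫ x, min (Y x) a ∂μ < ∫ x, Y x ∂μ) :
    ∫ x, min (Y x) a ∂μ < ∫ x, min (Y x) b ∂μ := by
  have hle : ∀ x, min (Y x) a ≤ min (Y x) b := fun x => min_le_min_left _ hab.le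
  refine (integral_mono (hY.min_const a) (hY.min_const b) hle).lt_of_ne fun heq => ha.ne ?_
  have hdiff : (fun x => min (Y x) b - min (Y x) a) =ᵐ[μ] 0 :=
    (integral_eq_zero_iff_of_nonneg (fun x => sub_nonneg.2 (hle x))
      ((hY.min_const b).sub (hY.min_const a))).1
      (by rw [integral_sub (hY.min_const b) (hY.min_const a), heq, sub_self])
  -- Where `Y > a`, the two truncations differ; so `Y ≤ a` almost everywhere.
  refine integral_congr_ae (hdiff.mono fun x hx => min_eq_left (not_lt.1 fun hYa => ?_))
  have hba : min (Y x) b = a := by rw [sub_eq_zero.1 hx, min_eq_right hYa.le]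
  exact (lt_min hYa hab).ne' hba

theorem existsUnique_pos_integral_min_const_eq_zero [IsProbabilityMeasure μ]
    (hY : Integrable Y μ) (hpos : 0 < ∫ x, Y x ∂μ) (hneg : ¬ 0 ≤ᵐ[μ] Y) :
    ∃! u : ℝ, 0 < u ∧ ∫ x, min (Y x) u ∂μ = 0 := by
  set F : ℝ → ℝ := fun u => ∫ x, min (Y x) u ∂μ
  have hF0 : F 0 < 0 := integral_min_zero_neg hY hneg
  have hu₀ : 0 < -F 0 / 2 := by linarith
  have hFu₀ : F (-F 0 / 2) < 0 := by linarith [integral_min_const_le_add hY hu₀.le]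
  obtain ⟨v, hFv, hv⟩ : ∃ v, 0 < F v ∧ -F 0 / 2 ≤ v :=
    (((tendsto_integral_min_const_atTop hY).eventually (eventually_gt_nhds hpos)).and
      (eventually_ge_atTop _)).exists
  obtain ⟨u, hu, hFu⟩ := intermediate_value_Icc hv
    (lipschitzWith_integral_min_const hY).continuous.continuousOn ⟨hFu₀.le, hFv.le⟩
  refine ⟨u, ⟨hu₀.trans_le hu.1, hFu⟩, fun w ⟨_, hFw⟩ => ?_⟩
  rcases lt_trichotomy w u with h | h | h
  · linarith [integral_min_const_lt_integral_min_const hY h (hFw.trans_lt hpos)]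
  · exact h
  · linarith [integral_min_const_lt_integral_min_const hY h (hFu.trans_lt hpos)]

end MeasureTheory

/-- existence and uniqueness of the contamination clipping
constant `u > 0` with `E[(X + r) ∧ u] = 0`, provided `0 < r < −essinf_P X`. -/
theorem contamination_clipping_constant_exists_unique
    {Ω : Type*} [MeasurableSpace Ω] (P : Measure Ω) [IsProbabilityMeasure P]
    (X : Ω → ℝ) (hX : MemLp X 2 P) (hcent : ∫ x, X x ∂P = 0)
    (r : ℝ) (hr : 0 < r) (hress : r < - essInf X P) :
    ∃! u : ℝ, 0 < u ∧ (∫ x, min (X x + r) u ∂P) = 0 := by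
  have hXi : Integrable X P := hX.integrable one_le_two
  refine existsUnique_pos_integral_min_const_eq_zero (hXi.add (integrable_const r)) ?_ ?_
  · simpa [integral_add hXi (integrable_const r), hcent] using hr
  · intro hnonneg
    have : -r ≤ essInf X P := le_essInf_of_ae_le (-r)
      (hnonneg.mono fun x hx => by simp only [Pi.zero_apply] at hx; linarith)
      (isCoboundedUnder_ge_ae_of_integrable hXi)
    linarith
end

section
/- Let (Ω, 𝔄, P) be a probability space, X ∈ L²(P) with E[X] = 0, and r > 0. If r < −essinf_P X, let u > 0 be the unique constant with E[(X + r) ∧ u] = 0; then the metric projection of X onto the contamination tangent ball G_c(r) = {g ∈ L²(P) : E[g] = 0, g ≥ −r P-a.e.} equals X − ((X + r) ∧ u), i.e. the residual X − π(X) is (X + r) ∧ u. If instead X ≥ −r P-a.e., then π(X) = X and the residual is 0. -/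
open MeasureTheory

/-! The candidate `q = X - ((X + r) ∧ u)` lies in `G_c(r)`, and it satisfies the variational
inequality `⟪X - q, g - q⟫ ≤ 0` for every `g ∈ G_c(r)`: pointwise
`((X + r) ∧ u) (g - q) ≤ u (g - q)`, since where the minimum is `X + r < u` we have
`g - q = g + r ≥ 0`, and `u (g - q)` integrates to `0`. In a Hilbert space this inequality
identifies any nearest point with `q`. If `X ≥ -r`, the same argument applies to `q = X`. -/

theorem eq_of_norm_sub_le_of_inner_sub_le_zero {E : Type*} [NormedAddCommGroup E]
    [InnerProductSpace ℝ E] {x p q : E} (hle : ‖x - p‖ ≤ ‖x - q‖)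
    (hinner : inner ℝ (x - q) (p - q) ≤ 0) : p = q := by
  have hexpand : ‖x - p‖ ^ 2 = ‖x - q‖ ^ 2 - 2 * inner ℝ (x - q) (p - q) + ‖p - q‖ ^ 2 := by
    rw [← norm_sub_sq_real, sub_sub_sub_cancel_right]
  have hsq : ‖x - p‖ ^ 2 ≤ ‖x - q‖ ^ 2 := pow_le_pow_left₀ (norm_nonneg _) hle 2
  have : ‖p - q‖ ^ 2 ≤ 0 := by linarith
  exact sub_eq_zero.mp (norm_eq_zero.mp (pow_eq_zero_iff two_ne_zero |>.mp
    (le_antisymm this (sq_nonneg _))))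

theorem min_add_mul_le_mul {a b r u : ℝ} (hb : -r ≤ b) :
    min (a + r) u * (b - (a - min (a + r) u)) ≤ u * (b - (a - min (a + r) u)) := by
  rcases le_total (a + r) u with hle | hle
  · rw [min_eq_left hle]
    exact mul_le_mul_of_nonneg_right hle (by linarith)
  · rw [min_eq_right hle]

namespace MeasureTheory

variable {Ω : Type*} [MeasurableSpace Ω] {P : Measure Ω} [IsFiniteMeasure P]

theorem L2.inner_le_zero_of_ae_mul_le {f h : Lp ℝ 2 P} {u : ℝ}
    (hle : ∀ᵐ x ∂P, f x * h x ≤ u * h x) (hh : ∫ x, h x ∂P = 0) : inner ℝ f h ≤ 0 := by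
  have hle' : ∀ᵐ x ∂P, inner ℝ (f x) (h x) ≤ u * h x := by
    filter_upwards [hle] with x hx
    rwa [real_inner_eq_re_inner, RCLike.inner_apply, conj_trivial, RCLike.re_to_real, mul_comm]
  calc inner ℝ f h = ∫ x, inner ℝ (f x) (h x) ∂P := L2.inner_def f h
    _ ≤ ∫ x, u * h x ∂P :=
      integral_mono_ae (L2.integrable_inner f h)
        (((Lp.memLp h).integrable one_le_two).const_mul u) hle'
    _ = 0 := by rw [integral_const_mul, hh, mul_zero]

theorem Lp.integral_coeFn_sub (f g : Lp ℝ 2 P) :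
    ∫ x, (f - g) x ∂P = ∫ x, f x ∂P - ∫ x, g x ∂P := by
  rw [integral_congr_ae (Lp.coeFn_sub f g)]
  exact integral_sub ((Lp.memLp f).integrable one_le_two) ((Lp.memLp g).integrable one_le_two)

theorem Lp.memLp_min_add_const (X : Lp ℝ 2 P) (r u : ℝ) :
    MemLp (fun x => min (X x + r) u) 2 P :=
  ((Lp.memLp X).add (memLp_const r)).inf (memLp_const u)

noncomputable def clippedResidual (X : Lp ℝ 2 P) (r u : ℝ) : Lp ℝ 2 P :=
  (Lp.memLp_min_add_const X r u).toLp _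

theorem coeFn_clippedResidual (X : Lp ℝ 2 P) (r u : ℝ) :
    clippedResidual X r u =ᵐ[P] fun x => min (X x + r) u :=
  MemLp.coeFn_toLp _

theorem coeFn_sub_clippedResidual (X : Lp ℝ 2 P) (r u : ℝ) :
    ⇑(X - clippedResidual X r u) =ᵐ[P] fun x => X x - min (X x + r) u := by
  filter_upwards [Lp.coeFn_sub X (clippedResidual X r u), coeFn_clippedResidual X r u]
    with x hsub hclip
  rw [hsub, Pi.sub_apply, hclip]

theorem integral_clippedResidual (X : Lp ℝ 2 P) (r u : ℝ) :
    ∫ x, clippedResidual X r u x ∂P = ∫ x, min (X x + r) u ∂P :=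
  integral_congr_ae (coeFn_clippedResidual X r u)

theorem neg_le_sub_clippedResidual (X : Lp ℝ 2 P) (r u : ℝ) :
    ∀ᵐ x ∂P, -r ≤ (X - clippedResidual X r u) x := by
  filter_upwards [coeFn_sub_clippedResidual X r u] with x hx
  rw [hx]
  linarith [min_le_left (X x + r) u]

theorem inner_clippedResidual_sub_le_zero {X g : Lp ℝ 2 P} {r u : ℝ}
    (hX : ∫ x, X x ∂P = ∫ x, min (X x + r) u ∂P)
    (hg : ∫ x, g x ∂P = 0) (hgr : ∀ᵐ x ∂P, -r ≤ g x) :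
    inner ℝ (clippedResidual X r u) (g - (X - clippedResidual X r u)) ≤ 0 := by
  refine L2.inner_le_zero_of_ae_mul_le (u := u) ?_ ?_
  · filter_upwards [coeFn_clippedResidual X r u, coeFn_sub_clippedResidual X r u, hgr,
      Lp.coeFn_sub g (X - clippedResidual X r u)] with x hclip hsub hgx hdiff
    rw [hdiff, Pi.sub_apply, hsub, hclip]
    exact min_add_mul_le_mul hgx
  · rw [Lp.integral_coeFn_sub, Lp.integral_coeFn_sub, integral_clippedResidual, hX, hg]
    ring

end MeasureTheory

theorem contamination_projection_residual_is_clipped_general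
    {Ω : Type*} [MeasurableSpace Ω] (P : Measure Ω) [IsProbabilityMeasure P]
    (r : ℝ)
    (X : Lp ℝ 2 P) (hcent : ∫ x, X x ∂P = 0)
    (G : Set (Lp ℝ 2 P))
    (hG : G = {g : Lp ℝ 2 P | (∫ x, g x ∂P) = 0 ∧ ∀ᵐ x ∂P, -r ≤ g x})
    (p : Lp ℝ 2 P) (hpG : p ∈ G) (hpmin : ∀ g ∈ G, ‖X - p‖ ≤ ‖X - g‖) :
    (∀ u : ℝ, 0 < u → (∫ x, min (X x + r) u ∂P) = 0 →
      r < - essInf (fun x => X x) P →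
      (fun x => X x - p x) =ᵐ[P] fun x => min (X x + r) u) ∧
    ((∀ᵐ x ∂P, -r ≤ X x) → p = X) := by
  subst hG
  refine ⟨fun u _ hclip _ => ?_, fun hXr => ?_⟩
  · have hqG : X - clippedResidual X r u ∈
        {g : Lp ℝ 2 P | (∫ x, g x ∂P) = 0 ∧ ∀ᵐ x ∂P, -r ≤ g x} := by
      refine ⟨?_, neg_le_sub_clippedResidual X r u⟩
      rw [Lp.integral_coeFn_sub, integral_clippedResidual, hcent, hclip, sub_zero]
    have hpq : p = X - clippedResidual X r u := by
      refine eq_of_norm_sub_le_of_inner_sub_le_zero (hpmin _ hqG) ?_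
      rw [sub_sub_cancel]
      exact inner_clippedResidual_sub_le_zero (hcent.trans hclip.symm) hpG.1 hpG.2
    filter_upwards [hpq ▸ coeFn_sub_clippedResidual X r u] with x hx
    rw [hx, sub_sub_cancel]
  · refine eq_of_norm_sub_le_of_inner_sub_le_zero (hpmin X ⟨hcent, hXr⟩) ?_
    rw [sub_self, inner_zero_left]

/-- the metric projection `p` of `X` onto the contamination
tangent ball `G_c(r) = {g ∈ L²(P) : E[g] = 0, g ≥ −r a.e.}` has residual
`X - p = (X + r) ∧ u` when `r < −essinf_P X` (with `u` the clipping constant),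
and `p = X` when `X ≥ −r` a.e. -/
theorem contamination_projection_residual_is_clipped
    {Ω : Type*} [MeasurableSpace Ω] (P : Measure Ω) [IsProbabilityMeasure P]
    (r : ℝ) (hr : 0 < r)
    (X : Lp ℝ 2 P) (hcent : ∫ x, X x ∂P = 0)
    (G : Set (Lp ℝ 2 P))
    (hG : G = {g : Lp ℝ 2 P | (∫ x, g x ∂P) = 0 ∧ ∀ᵐ x ∂P, -r ≤ g x})
    (p : Lp ℝ 2 P) (hpG : p ∈ G) (hpmin : ∀ g ∈ G, ‖X - p‖ ≤ ‖X - g‖) :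
    (∀ u : ℝ, 0 < u → (∫ x, min (X x + r) u ∂P) = 0 →
      r < - essInf (fun x => X x) P →
      (fun x => X x - p x) =ᵐ[P] fun x => min (X x + r) u) ∧
    ((∀ᵐ x ∂P, -r ≤ X x) → p = X) :=
  contamination_projection_residual_is_clipped_general P r X hcent G hG p hpG hpmin
end

section
/- Let (Ω, 𝔄, P) be a probability space, X ∈ L²(P) with E[X] = 0, and 0 < r < −essinf_P X. Let u > 0 be the unique constant with E[(X + r) ∧ u] = 0 and set X⁽ᶜ⁾ = (X + r) ∧ u. Then E[X⁽ᶜ⁾ X] = E[(X⁽ᶜ⁾)²] + E[X⁽ᶜ⁾ (X + r − X⁽ᶜ⁾)], and E[X⁽ᶜ⁾ X] > 0. -/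
/-!
Since `E[X⁽ᶜ⁾] = 0`, the constant `r` can be inserted for free:
`E[X⁽ᶜ⁾ X] = E[X⁽ᶜ⁾ (X + r)] = E[(X⁽ᶜ⁾)²] + E[X⁽ᶜ⁾ (X + r − X⁽ᶜ⁾)]`.
The last term is nonnegative because `X + r − X⁽ᶜ⁾` vanishes where `X⁽ᶜ⁾ < u` and
`X⁽ᶜ⁾ = u > 0` elsewhere. The second moment is positive: `X⁽ᶜ⁾ = 0` a.s. would force
`X = −r` a.s., contradicting `E[X] = 0`.
-/

open MeasureTheory

lemma min_mul_sub_min_nonneg {a u : ℝ} (hu : 0 ≤ u) : 0 ≤ min a u * (a - min a u) := by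
  rcases le_total a u with h | h
  · simp [min_eq_left h]
  · rw [min_eq_right h]
    exact mul_nonneg hu (sub_nonneg.mpr h)

lemma eq_neg_of_min_add_eq_zero {a r u : ℝ} (hu : 0 < u) (h : min (a + r) u = 0) : a = -r := by
  rcases le_total (a + r) u with h' | h'
  · rw [min_eq_left h'] at h
    linarith
  · rw [min_eq_right h'] at h
    linarith

section

variable {Ω : Type*} [MeasurableSpace Ω] {P : Measure Ω}

lemma integral_mul_eq_integral_sq_add_of_integral_eq_zero [IsFiniteMeasure P] {f g : Ω → ℝ}
    (hf : MemLp f 2 P) (hg : MemLp g 2 P) (hf0 : ∫ x, f x ∂P = 0) (r : ℝ) :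
    ∫ x, f x * g x ∂P = ∫ x, f x ^ 2 ∂P + ∫ x, f x * (g x + r - f x) ∂P := by
  have hfg : Integrable (fun x => f x * g x) P := hf.integrable_mul hg
  have hff : Integrable (fun x => f x * f x) P := hf.integrable_mul hf
  have hrf : Integrable (fun x => r * f x) P := (hf.integrable one_le_two).const_mul r
  have hrem : ∫ x, f x * (g x + r - f x) ∂P
      = ∫ x, f x * g x ∂P + r * ∫ x, f x ∂P - ∫ x, f x * f x ∂P := by
    simp_rw [mul_sub, mul_add, mul_comm (f _) r]
    rw [integral_sub (f := fun x => f x * g x + r * f x) (hfg.add hrf) hff, integral_add hfg hrf,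
      integral_const_mul]
  simp_rw [hrem, hf0, sq]
  ring

lemma integral_sq_pos_of_not_ae_eq_zero {f : Ω → ℝ} (hf : MemLp f 2 P) (hf0 : ¬ f =ᵐ[P] 0) :
    0 < ∫ x, f x ^ 2 ∂P := by
  refine (integral_nonneg fun x => sq_nonneg (f x)).lt_of_ne fun h => hf0 ?_
  have hsq : (fun x => f x ^ 2) =ᵐ[P] 0 :=
    (integral_eq_zero_iff_of_nonneg (fun x => sq_nonneg (f x)) hf.integrable_sq).mp h.symm
  filter_upwards [hsq] with x hx
  exact pow_eq_zero_iff two_ne_zero |>.mp hx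

end

theorem contamination_clipped_scores_inner_product_general
    {Ω : Type*} [MeasurableSpace Ω] (P : Measure Ω) [IsProbabilityMeasure P]
    (X : Ω → ℝ) (hX : MemLp X 2 P) (hcent : ∫ x, X x ∂P = 0)
    (r : ℝ) (hr : 0 < r)
    (u : ℝ) (hu : 0 < u) (hueq : (∫ x, min (X x + r) u ∂P) = 0)
    (Xc : Ω → ℝ) (hXc : Xc = fun x => min (X x + r) u) :
    (∫ x, Xc x * X x ∂P) =
      (∫ x, (Xc x) ^ 2 ∂P) + (∫ x, Xc x * (X x + r - Xc x) ∂P) ∧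
    0 < ∫ x, Xc x * X x ∂P := by
  subst hXc
  have hXcL2 : MemLp (fun x => min (X x + r) u) 2 P :=
    (hX.add (memLp_const r)).inf (memLp_const u)
  have key := integral_mul_eq_integral_sq_add_of_integral_eq_zero hXcL2 hX hueq r
  have hsq : 0 < ∫ x, min (X x + r) u ^ 2 ∂P := by
    refine integral_sq_pos_of_not_ae_eq_zero hXcL2 fun hzero => ?_
    have hXconst : X =ᵐ[P] fun _ => -r := by
      filter_upwards [hzero] with x hx
      exact eq_neg_of_min_add_eq_zero hu hx
    have : ∫ x, X x ∂P = -r := by simp [integral_congr_ae hXconst]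
    linarith
  have hrem : 0 ≤ ∫ x, min (X x + r) u * (X x + r - min (X x + r) u) ∂P :=
    integral_nonneg fun x => min_mul_sub_min_nonneg hu.le
  exact ⟨key, key ▸ add_pos_of_pos_of_nonneg hsq hrem⟩

/-- for the clipped scores `X⁽ᶜ⁾ = (X + r) ∧ u` in the
contamination model, `E[X⁽ᶜ⁾ X] = E[(X⁽ᶜ⁾)²] + E[X⁽ᶜ⁾(X + r − X⁽ᶜ⁾)]`, and
`E[X⁽ᶜ⁾ X] > 0`. -/
theorem contamination_clipped_scores_inner_product
    {Ω : Type*} [MeasurableSpace Ω] (P : Measure Ω) [IsProbabilityMeasure P]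
    (X : Ω → ℝ) (hX : MemLp X 2 P) (hcent : ∫ x, X x ∂P = 0)
    (r : ℝ) (hr : 0 < r) (hress : r < - essInf X P)
    (u : ℝ) (hu : 0 < u) (hueq : (∫ x, min (X x + r) u ∂P) = 0)
    (huuniq : ∀ u' : ℝ, 0 < u' → (∫ x, min (X x + r) u' ∂P) = 0 → u' = u)
    (Xc : Ω → ℝ) (hXc : Xc = fun x => min (X x + r) u) :
    (∫ x, Xc x * X x ∂P) =
      (∫ x, (Xc x) ^ 2 ∂P) + (∫ x, Xc x * (X x + r - Xc x) ∂P) ∧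
    0 < ∫ x, Xc x * X x ∂P :=
  contamination_clipped_scores_inner_product_general P X hX hcent r hr u hu hueq Xc hXc
end

section
/- Let (Ω, 𝔄, P) be a probability space, Λ ∈ L²(P; ℝ^k) with E[Λ] = 0, and let G be a closed linear subspace of L²(P) with E[g] = 0 for all g ∈ G. Let π_G : L²(P) → G be the orthogonal projection, applied coordinatewise to Λ, and set 𝒥 = E[(Λ − π_G Λ)(Λ − π_G Λ)ᵀ]. Define Ψ = {ψ ∈ L²(P; ℝ^k) : E[ψ] = 0, E[ψ Λᵀ] = I_k, and E[ψ g] = 0 for all g ∈ G}. Then the following are equivalent: (i) Ψ ≠ ∅; (ii) 𝒥 is positive definite; (iii) for every a ∈ ℝ^k with a ≠ 0, the scalar function aᵀΛ does not belong to G. -/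
/-!
Let `R i = Λ i - π_G Λ i` be the residual scores. Then `𝒥` is the Gram matrix of `R`, so it is
positive definite iff `R` is linearly independent. Since `R i ⊥ G` and `Λ i - R i ∈ G`, a
combination `aᵀΛ` lies in `G` iff `aᵀR = 0`. Every `ψ ∈ Ψ` is orthogonal to `G`, hence satisfies
`⟪ψ i, R j⟫ = δᵢⱼ`, which forces linear independence. Conversely `ψ = 𝒥⁻¹ R` is such a dual family,
and it is centred and orthogonal to `G` because every `R i` is.
-/

open MeasureTheory Matrix
open scoped InnerProductSpace ComplexOrder

section Biorthogonal

variable {𝕜 E ι : Type*} [RCLike 𝕜] [NormedAddCommGroup E] [InnerProductSpace 𝕜 E]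
  [Fintype ι] [DecidableEq ι]

theorem linearIndependent_of_inner_biorthogonal {v ψ : ι → E}
    (hψ : ∀ i j, ⟪ψ i, v j⟫_𝕜 = if i = j then 1 else 0) : LinearIndependent 𝕜 v := by
  refine Fintype.linearIndependent_iff.mpr fun c hc i => ?_
  have := congrArg (fun x => ⟪ψ i, x⟫_𝕜) hc
  simpa [inner_sum, inner_smul_right, hψ] using this

theorem LinearIndependent.exists_inner_biorthogonal {v : ι → E} (hv : LinearIndependent 𝕜 v) :
    ∃ ψ : ι → E, (∀ i, ψ i ∈ Submodule.span 𝕜 (Set.range v)) ∧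
      ∀ i j, ⟪ψ i, v j⟫_𝕜 = if i = j then 1 else 0 := by
  set M := (gram 𝕜 v)⁻¹
  have hM : M * gram 𝕜 v = 1 :=
    nonsing_inv_mul _ (isUnit_iff_ne_zero.mpr (posDef_gram_of_linearIndependent hv).det_pos.ne')
  refine ⟨fun i => ∑ l, star (M i l) • v l, fun i => ?_, fun i j => ?_⟩
  · exact Submodule.sum_mem _ fun l _ => Submodule.smul_mem _ _ (Submodule.subset_span ⟨l, rfl⟩)
  · simp only [sum_inner, inner_smul_left, RCLike.star_def, RCLike.conj_conj]
    rw [← one_apply, ← hM, mul_apply]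
    rfl

end Biorthogonal

section Residual

variable {𝕜 E ι : Type*} [RCLike 𝕜] [NormedAddCommGroup E] [InnerProductSpace 𝕜 E]
  {G : Submodule 𝕜 E}

theorem inner_eq_of_mem_orthogonal_of_sub_mem {ψ x y : E} (hψ : ψ ∈ Gᗮ) (hxy : x - y ∈ G) :
    ⟪ψ, x⟫_𝕜 = ⟪ψ, y⟫_𝕜 := by
  rw [← sub_eq_zero, ← inner_sub_right]
  exact (Submodule.mem_orthogonal' G ψ).mp hψ _ hxy

theorem mem_iff_eq_zero_of_sub_mem_of_mem_orthogonal {x y : E} (hxy : x - y ∈ G) (hy : y ∈ Gᗮ) :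
    x ∈ G ↔ y = 0 := by
  rw [← G.sub_mem_iff_left hxy, sub_sub_cancel]
  exact ⟨fun hyG => Submodule.mem_bot 𝕜 |>.mp (G.inf_orthogonal_eq_bot ▸ ⟨hyG, hy⟩),
    fun h => h ▸ G.zero_mem⟩

variable [Fintype ι] {Λ R : ι → E}

theorem linearIndependent_iff_forall_sum_smul_notMem (hΛR : ∀ i, Λ i - R i ∈ G)
    (hR : ∀ i, R i ∈ Gᗮ) :
    LinearIndependent 𝕜 R ↔ ∀ a : ι → 𝕜, a ≠ 0 → ∑ i, a i • Λ i ∉ G := by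
  have hmem_iff (a : ι → 𝕜) : ∑ i, a i • Λ i ∈ G ↔ ∑ i, a i • R i = 0 :=
    mem_iff_eq_zero_of_sub_mem_of_mem_orthogonal
      (by simpa only [← Finset.sum_sub_distrib, ← smul_sub] using
        G.sum_mem fun i _ => G.smul_mem (a i) (hΛR i))
      (Gᗮ.sum_mem fun i _ => Gᗮ.smul_mem (a i) (hR i))
  rw [Fintype.linearIndependent_iff]
  refine forall_congr' fun a => ?_
  rw [hmem_iff, Ne, funext_iff]
  exact not_imp_not.symm

theorem exists_inner_biorthogonal_mem_iff_linearIndependent [DecidableEq ι]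
    (hΛR : ∀ i, Λ i - R i ∈ G) {K : Submodule 𝕜 E} (hRK : ∀ i, R i ∈ K) (hK : K ≤ Gᗮ) :
    (∃ ψ : ι → E, (∀ i, ψ i ∈ K) ∧ ∀ i j, ⟪ψ i, Λ j⟫_𝕜 = if i = j then 1 else 0) ↔
      LinearIndependent 𝕜 R := by
  constructor
  · rintro ⟨ψ, hψK, hψΛ⟩
    exact linearIndependent_of_inner_biorthogonal fun i j =>
      (inner_eq_of_mem_orthogonal_of_sub_mem (hK (hψK i)) (hΛR j)).symm.trans (hψΛ i j)
  · intro hR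
    obtain ⟨ψ, hψ_span, hψR⟩ := hR.exists_inner_biorthogonal
    have hψK i : ψ i ∈ K := Submodule.span_le.mpr (Set.range_subset_iff.mpr hRK) (hψ_span i)
    exact ⟨ψ, hψK, fun i j =>
      (inner_eq_of_mem_orthogonal_of_sub_mem (hK (hψK i)) (hΛR j)).trans (hψR i j)⟩

end Residual

namespace MeasureTheory.L2

variable {Ω : Type*} [MeasurableSpace Ω] {P : Measure Ω}

theorem integral_mul_eq_inner (f g : Lp ℝ 2 P) : ∫ x, f x * g x ∂P = ⟪f, g⟫_ℝ := by
  simp [inner_def, mul_comm]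

theorem integral_eq_inner_const_one [IsFiniteMeasure P] (f : Lp ℝ 2 P) :
    ∫ x, f x ∂P = ⟪f, Lp.const 2 P (1 : ℝ)⟫_ℝ := by
  rw [← integral_mul_eq_inner]
  refine integral_congr_ae ?_
  filter_upwards [Lp.coeFn_const 2 P (1 : ℝ)] with x hx
  rw [hx, Function.const_apply, mul_one]

end MeasureTheory.L2

theorem influence_curves_exist_iff_fisher_info_posdef_general
    {Ω : Type*} [MeasurableSpace Ω] (P : Measure Ω) [IsProbabilityMeasure P]
    (k : ℕ) (Λ : Fin k → Lp ℝ 2 P) (hcent : ∀ i, ∫ x, Λ i x ∂P = 0)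
    (G : Submodule ℝ (Lp ℝ 2 P))
    (hGcent : ∀ g ∈ G, ∫ x, g x ∂P = 0)
    (πΛ : Fin k → Lp ℝ 2 P)
    (hπmem : ∀ i, πΛ i ∈ G)
    (hπorth : ∀ i, ∀ g ∈ G, ∫ x, (Λ i x - πΛ i x) * g x ∂P = 0)
    (𝒥 : Matrix (Fin k) (Fin k) ℝ)
    (hJ : ∀ i j, 𝒥 i j = ∫ x, (Λ i x - πΛ i x) * (Λ j x - πΛ j x) ∂P)
    (Ψ : Set (Fin k → Lp ℝ 2 P))
    (hΨ : Ψ = {ψ | (∀ i, ∫ x, ψ i x ∂P = 0) ∧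
      (∀ i j, (∫ x, ψ i x * Λ j x ∂P) = if i = j then 1 else 0) ∧
      (∀ g ∈ G, ∀ i, ∫ x, ψ i x * g x ∂P = 0)}) :
    (Ψ.Nonempty ↔ 𝒥.PosDef) ∧
    (𝒥.PosDef ↔ ∀ a : Fin k → ℝ, a ≠ 0 → (∑ i, a i • Λ i) ∉ G) := by
  set R : Fin k → Lp ℝ 2 P := fun i => Λ i - πΛ i
  set K : Submodule ℝ (Lp ℝ 2 P) := (ℝ ∙ Lp.const 2 P (1 : ℝ))ᗮ ⊓ Gᗮ
  have hR_ae i : R i =ᵐ[P] fun x => Λ i x - πΛ i x := Lp.coeFn_sub _ _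
  have hJ_gram : 𝒥 = gram ℝ R := Matrix.ext fun i j => by
    rw [hJ, gram_apply, ← L2.integral_mul_eq_inner]
    exact integral_congr_ae ((hR_ae i).mul (hR_ae j)).symm
  have hR_orth i : R i ∈ Gᗮ := (G.mem_orthogonal' _).mpr fun g hg => by
    rw [← L2.integral_mul_eq_inner, ← hπorth i g hg]
    exact integral_congr_ae ((hR_ae i).mul .rfl)
  have hR_cent i : R i ∈ (ℝ ∙ Lp.const 2 P (1 : ℝ))ᗮ := by
    have hint (f : Lp ℝ 2 P) : Integrable f P := (Lp.memLp f).integrable one_le_two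
    rw [Submodule.mem_orthogonal_singleton_iff_inner_left, ← L2.integral_eq_inner_const_one,
      integral_congr_ae (hR_ae i), integral_sub (hint _) (hint _), hcent, hGcent _ (hπmem i),
      sub_zero]
  have hΛ_sub_R i : Λ i - R i ∈ G := by simpa [R] using hπmem i
  have hΨ_mem ψ : ψ ∈ Ψ ↔ (∀ i, ψ i ∈ K) ∧ ∀ i j, ⟪ψ i, Λ j⟫_ℝ = if i = j then 1 else 0 := by
    simp only [hΨ, Set.mem_ofPred_eq, K, Submodule.mem_inf, forall_and,
      Submodule.mem_orthogonal_singleton_iff_inner_left, L2.integral_eq_inner_const_one,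
      L2.integral_mul_eq_inner, Submodule.mem_orthogonal' G]
    tauto
  rw [hJ_gram, posDef_gram_iff_linearIndependent,
    ← linearIndependent_iff_forall_sum_smul_notMem hΛ_sub_R hR_orth,
    ← exists_inner_biorthogonal_mem_iff_linearIndependent hΛ_sub_R (K := K)
      (fun i => Submodule.mem_inf.mpr ⟨hR_cent i, hR_orth i⟩) inf_le_right]
  exact ⟨exists_congr hΨ_mem, Iff.rfl⟩

/-- existence of influence curves is equivalent to positive
definiteness of the Fisher information `𝒥` of the residual scores, and to
the condition that no nontrivial linear combination `aᵀΛ` lies in the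
nuisance tangent space `G`. -/
theorem influence_curves_exist_iff_fisher_info_posdef
    {Ω : Type*} [MeasurableSpace Ω] (P : Measure Ω) [IsProbabilityMeasure P]
    (k : ℕ) (Λ : Fin k → Lp ℝ 2 P) (hcent : ∀ i, ∫ x, Λ i x ∂P = 0)
    (G : Submodule ℝ (Lp ℝ 2 P)) (hGclosed : IsClosed (G : Set (Lp ℝ 2 P)))
    (hGcent : ∀ g ∈ G, ∫ x, g x ∂P = 0)
    (πΛ : Fin k → Lp ℝ 2 P)
    (hπmem : ∀ i, πΛ i ∈ G)
    (hπorth : ∀ i, ∀ g ∈ G, ∫ x, (Λ i x - πΛ i x) * g x ∂P = 0)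
    (𝒥 : Matrix (Fin k) (Fin k) ℝ)
    (hJ : ∀ i j, 𝒥 i j = ∫ x, (Λ i x - πΛ i x) * (Λ j x - πΛ j x) ∂P)
    (Ψ : Set (Fin k → Lp ℝ 2 P))
    (hΨ : Ψ = {ψ | (∀ i, ∫ x, ψ i x ∂P = 0) ∧
      (∀ i j, (∫ x, ψ i x * Λ j x ∂P) = if i = j then 1 else 0) ∧
      (∀ g ∈ G, ∀ i, ∫ x, ψ i x * g x ∂P = 0)}) :
    (Ψ.Nonempty ↔ 𝒥.PosDef) ∧
    (𝒥.PosDef ↔ ∀ a : Fin k → ℝ, a ≠ 0 → (∑ i, a i • Λ i) ∉ G) :=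
  influence_curves_exist_iff_fisher_info_posdef_general P k Λ hcent G hGcent πΛ hπmem hπorth 𝒥 hJ Ψ
    hΨ
end

section
/- Let H be a real Hilbert space and G₀, G₁ ⊆ H nonempty, closed, convex, and disjoint sets such that G₁₀ = G₁ − G₀ is closed, and let q₁₀ be the unique minimum-norm element of G₁₀. If (g₀, g₁) and (q₀, q₁) are two pairs in G₀ × G₁ with g₁ − g₀ = q₁ − q₀ = q₁₀, then ⟨q₁₀, g₀⟩ = ⟨q₁₀, q₀⟩ and ⟨q₁₀, g₁⟩ = ⟨q₁₀, q₁⟩. -/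
open scoped RealInnerProductSpace Pointwise

theorem Convex.inner_sub_nonneg_of_forall_norm_le {E : Type*} [NormedAddCommGroup E]
    [InnerProductSpace ℝ E] {K : Set E} (hK : Convex ℝ K) {q w : E} (hq : q ∈ K)
    (hmin : ∀ v ∈ K, ‖q‖ ≤ ‖v‖) (hw : w ∈ K) : 0 ≤ ⟪q, w - q⟫ := by
  have hloc : IsLocalMinOn (fun x : E => ‖x‖ ^ 2) K q :=
    IsMinOn.localize fun v hv => pow_le_pow_left₀ (norm_nonneg q) (hmin v hv) 2
  have hderiv := hloc.hasFDerivWithinAt_nonneg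
    (hasStrictFDerivAt_norm_sq q).hasFDerivAt.hasFDerivWithinAt
    (sub_mem_posTangentConeAt_of_segment_subset (hK.segment_subset hq hw))
  simpa using hderiv

theorem least_favorable_pairs_same_inner_products_general
    {H : Type*} [NormedAddCommGroup H] [InnerProductSpace ℝ H]
    (G₀ G₁ : Set H)
    (h₀cv : Convex ℝ G₀) (h₁cv : Convex ℝ G₁)
    (G₁₀ : Set H) (hG₁₀ : G₁₀ = {d | ∃ g₀ ∈ G₀, ∃ g₁ ∈ G₁, d = g₁ - g₀})
    (q₁₀ : H) (hq₁₀mem : q₁₀ ∈ G₁₀) (hq₁₀min : ∀ g ∈ G₁₀, ‖q₁₀‖ ≤ ‖g‖)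
    (g₀ q₀ : H) (hg₀ : g₀ ∈ G₀) (hq₀ : q₀ ∈ G₀)
    (g₁ q₁ : H) (hg₁ : g₁ ∈ G₁) (hq₁ : q₁ ∈ G₁)
    (hgdiff : g₁ - g₀ = q₁₀) (hqdiff : q₁ - q₀ = q₁₀) :
    ⟪q₁₀, g₀⟫ = ⟪q₁₀, q₀⟫ ∧ ⟪q₁₀, g₁⟫ = ⟪q₁₀, q₁⟫ := by
  have hG₁₀sub : G₁₀ = G₁ - G₀ := by
    ext d
    simp only [hG₁₀, Set.mem_ofPred_eq, Set.mem_sub]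
    exact ⟨fun ⟨a, ha, b, hb, h⟩ => ⟨b, hb, a, ha, h.symm⟩,
      fun ⟨b, hb, a, ha, h⟩ => ⟨a, ha, b, hb, h.symm⟩⟩
  have hG₁₀cv : Convex ℝ G₁₀ := hG₁₀sub ▸ h₁cv.sub h₀cv
  -- Swapping partners, `q₁ - g₀ = q₁₀ + (q₀ - g₀)` and `g₁ - q₀ = q₁₀ - (q₀ - g₀)` lie in `G₁₀`.
  have hplus : 0 ≤ ⟪q₁₀, q₀ - g₀⟫ := by
    convert hG₁₀cv.inner_sub_nonneg_of_forall_norm_le hq₁₀mem hq₁₀min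
      (w := q₁ - g₀) (hG₁₀sub ▸ Set.sub_mem_sub hq₁ hg₀) using 2
    rw [← hqdiff]; abel
  have hminus : 0 ≤ ⟪q₁₀, g₀ - q₀⟫ := by
    convert hG₁₀cv.inner_sub_nonneg_of_forall_norm_le hq₁₀mem hq₁₀min
      (w := g₁ - q₀) (hG₁₀sub ▸ Set.sub_mem_sub hg₁ hq₀) using 2
    rw [← hgdiff]; abel
  have h₀ : ⟪q₁₀, g₀⟫ = ⟪q₁₀, q₀⟫ := by
    rw [inner_sub_right] at hplus hminus
    linarith
  refine ⟨h₀, ?_⟩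
  rw [← sub_add_cancel g₁ g₀, ← sub_add_cancel q₁ q₀, hgdiff, hqdiff,
    inner_add_right, inner_add_right, h₀]

/-- any two least favorable pairs realizing the minimum-norm
difference `q₁₀` have the same inner products with `q₁₀`:
`⟪q₁₀, g₀⟫ = ⟪q₁₀, q₀⟫` and `⟪q₁₀, g₁⟫ = ⟪q₁₀, q₁⟫`. -/
theorem least_favorable_pairs_same_inner_products
    {H : Type*} [NormedAddCommGroup H] [InnerProductSpace ℝ H] [CompleteSpace H]
    (G₀ G₁ : Set H)
    (h₀ne : G₀.Nonempty) (h₁ne : G₁.Nonempty)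
    (h₀cl : IsClosed G₀) (h₁cl : IsClosed G₁)
    (h₀cv : Convex ℝ G₀) (h₁cv : Convex ℝ G₁)
    (hdisj : Disjoint G₀ G₁)
    (G₁₀ : Set H) (hG₁₀ : G₁₀ = {d | ∃ g₀ ∈ G₀, ∃ g₁ ∈ G₁, d = g₁ - g₀})
    (hG₁₀cl : IsClosed G₁₀)
    (q₁₀ : H) (hq₁₀mem : q₁₀ ∈ G₁₀) (hq₁₀min : ∀ g ∈ G₁₀, ‖q₁₀‖ ≤ ‖g‖)
    (g₀ q₀ : H) (hg₀ : g₀ ∈ G₀) (hq₀ : q₀ ∈ G₀)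
    (g₁ q₁ : H) (hg₁ : g₁ ∈ G₁) (hq₁ : q₁ ∈ G₁)
    (hgdiff : g₁ - g₀ = q₁₀) (hqdiff : q₁ - q₀ = q₁₀) :
    ⟪q₁₀, g₀⟫ = ⟪q₁₀, q₀⟫ ∧ ⟪q₁₀, g₁⟫ = ⟪q₁₀, q₁⟫ :=
  least_favorable_pairs_same_inner_products_general G₀ G₁ h₀cv h₁cv G₁₀ hG₁₀ q₁₀ hq₁₀mem hq₁₀min g₀
    q₀ hg₀ hq₀ g₁ q₁ hg₁ hq₁ hgdiff hqdiff
end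

section
/- Let (Ω, 𝔄, P) be a probability space, Λ ∈ L²(P) with E[Λ] = 0, let τ > 0, r₀, r₁ ≥ 0, r = r₀ + r₁ > 0, and assume 2r < τE[|Λ|]. Let v′ < 0 < v″ be the unique reals with τE[(v′ − Λ)₊] = r = τE[(Λ − v″)₊]. Let G_v = {g ∈ L²(P) : E[g] = 0, E[|g|] ≤ 2} be the normed total variation ball, G₀ = r₀G_v, G₁ = τΛ + r₁G_v, and set g̃ = (τ/r)((Λ − v″)₊ − (v′ − Λ)₊). Then g̃ ∈ G_v, G₀ and G₁ are disjoint, the pair (q₀, q₁) = (r₀g̃, τΛ − r₁g̃) belongs to G₀ × G₁, and q₁ − q₀ = τ(v′ ∨ Λ ∧ v″) is the minimum-norm element of G₁ − G₀. -/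
/-!
Write `q = τΛ − r g̃`; pointwise `q = τ(v′ ∨ Λ ∧ v″)`, so `q` takes values in `[τv′, τv″]`.
For `u` in the total variation ball, `E[u] = 0` lets one centre `q` at the midpoint of this
interval, and `E[|u|] ≤ 2` then gives `|⟪q, u⟫| ≤ τ(v″ − v′)`. The direction `g̃` attains the
bound, being supported where `q` sits at the endpoints. Hence for `d = (τΛ + r₁u₁) − r₀u₀` in
`G₁ − G₀`, `⟪q, d − q⟫ = r₁(⟪q, u₁⟫ + ⟪q, g̃⟫) + r₀(⟪q, g̃⟫ − ⟪q, u₀⟫) ≥ 0`, the variational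
characterisation of the minimum-norm point. Disjointness is the triangle inequality for `E[|·|]`:
a common point of `G₀` and `G₁` would give `τE[|Λ|] ≤ 2r`.
-/

open MeasureTheory
open scoped RealInnerProductSpace

section InnerProductSpace

variable {E : Type*} [NormedAddCommGroup E] [InnerProductSpace ℝ E]

theorem norm_le_norm_of_inner_sub_nonneg {q d : E} (h : 0 ≤ ⟪q, d - q⟫) : ‖q‖ ≤ ‖d‖ := by
  have hsq := norm_add_sq_real q (d - q)
  rw [add_sub_cancel] at hsq
  nlinarith [norm_nonneg q, norm_nonneg d, sq_nonneg ‖d - q‖]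

theorem norm_sub_smul_sub_smul_le_of_abs_inner_le {B : Set E} {Λ g u₀ u₁ : E} {r₀ r₁ : ℝ}
    (h₀ : 0 ≤ r₀) (h₁ : 0 ≤ r₁)
    (hB : ∀ u ∈ B, |⟪Λ - r₁ • g - r₀ • g, u⟫| ≤ ⟪Λ - r₁ • g - r₀ • g, g⟫)
    (hu₀ : u₀ ∈ B) (hu₁ : u₁ ∈ B) :
    ‖Λ - r₁ • g - r₀ • g‖ ≤ ‖Λ + r₁ • u₁ - r₀ • u₀‖ := by
  set q := Λ - r₁ • g - r₀ • g with hq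
  apply norm_le_norm_of_inner_sub_nonneg
  have hd : Λ + r₁ • u₁ - r₀ • u₀ - q = r₁ • (u₁ + g) + r₀ • (g - u₀) := by
    rw [hq]; module
  rw [hd, inner_add_right, real_inner_smul_right, real_inner_smul_right, inner_add_right,
    inner_sub_right]
  have hB₀ := abs_le.mp (hB u₀ hu₀)
  have hB₁ := abs_le.mp (hB u₁ hu₁)
  exact add_nonneg (mul_nonneg h₁ (by linarith)) (mul_nonneg h₀ (by linarith))

end InnerProductSpace

section Clamp

variable {a b x : ℝ}

theorem sub_posPart_add_posPart_eq_clamp (h : a ≤ b) :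
    x - max (x - b) 0 + max (a - x) 0 = max a (min x b) := by
  rcases le_total x a with h₁ | h₁
  · rw [min_eq_left (h₁.trans h), max_eq_left h₁, max_eq_right (by linarith : x - b ≤ 0),
      max_eq_left (sub_nonneg.2 h₁)]
    ring
  rcases le_total x b with h₂ | h₂
  · rw [max_eq_right (sub_nonpos.2 h₂), max_eq_right (sub_nonpos.2 h₁), min_eq_left h₂,
      max_eq_right h₁]
    ring
  · rw [max_eq_left (sub_nonneg.2 h₂), max_eq_right (by linarith : a - x ≤ 0), min_eq_right h₂,
      max_eq_right h]
    ring

theorem abs_posPart_sub_posPart (h : a ≤ b) :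
    |max (x - b) 0 - max (a - x) 0| = max (x - b) 0 + max (a - x) 0 := by
  rcases le_total x b with h₂ | h₂
  · rw [max_eq_right (sub_nonpos.2 h₂), zero_sub, zero_add, abs_neg,
      abs_of_nonneg (le_max_right _ _)]
  · rw [max_eq_right (by linarith : a - x ≤ 0), sub_zero, add_zero,
      abs_of_nonneg (le_max_right _ _)]

theorem clamp_mul_posPart_sub_posPart (h : a ≤ b) :
    max a (min x b) * (max (x - b) 0 - max (a - x) 0) = b * max (x - b) 0 - a * max (a - x) 0 := by
  rcases le_total x a with h₁ | h₁
  · rw [min_eq_left (h₁.trans h), max_eq_left h₁, max_eq_right (by linarith : x - b ≤ 0)]; ring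
  rcases le_total x b with h₂ | h₂
  · rw [max_eq_right (sub_nonpos.2 h₂), max_eq_right (sub_nonpos.2 h₁)]; ring
  · rw [min_eq_right h₂, max_eq_right h, max_eq_right (by linarith : a - x ≤ 0)]; ring

end Clamp

namespace MeasureTheory

variable {Ω : Type*} [MeasurableSpace Ω] {P : Measure Ω}

def tvBall (P : Measure Ω) : Set (Lp ℝ 2 P) :=
  {g | ∫ x, g x ∂P = 0 ∧ ∫ x, |g x| ∂P ≤ 2}

theorem L2.inner_eq_integral_mul (f g : Lp ℝ 2 P) : ⟪f, g⟫ = ∫ x, f x * g x ∂P := by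
  simp only [L2.inner_def, RCLike.inner_apply, conj_trivial, mul_comm]

theorem L2.integrable_mul (f g : Lp ℝ 2 P) : Integrable (fun x => f x * g x) P := by
  simpa [mul_comm] using L2.integrable_inner (𝕜 := ℝ) f g

theorem neg_mem_tvBall {g : Lp ℝ 2 P} (hg : g ∈ tvBall P) : -g ∈ tvBall P := by
  have hneg : (fun x => (-g : Lp ℝ 2 P) x) =ᵐ[P] fun x => -g x := Lp.coeFn_neg g
  refine ⟨?_, ?_⟩
  · rw [integral_congr_ae hneg, integral_neg, hg.1, neg_zero]
  · have habs : (fun x => |(-g : Lp ℝ 2 P) x|) =ᵐ[P] fun x => |g x| := by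
      filter_upwards [hneg] with x hx
      rw [hx, abs_neg]
    rw [integral_congr_ae habs]
    exact hg.2

theorem integral_abs_coeFn_smul (c : ℝ) (f : Lp ℝ 2 P) :
    ∫ x, |(c • f) x| ∂P = |c| * ∫ x, |f x| ∂P := by
  rw [← integral_const_mul]
  refine integral_congr_ae ?_
  filter_upwards [Lp.coeFn_smul c f] with x hx
  rw [hx, Pi.smul_apply, smul_eq_mul, abs_mul]

theorem coeFn_smul_sub_smul_sub_smul_ae_eq_clamp {Λ g : Lp ℝ 2 P} {a b τ r r₀ r₁ : ℝ}
    (hab : a ≤ b) (hr : r = r₀ + r₁) (hr₀ : r ≠ 0)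
    (hg : (fun x => g x) =ᵐ[P] fun x => τ / r * (max (Λ x - b) 0 - max (a - Λ x) 0)) :
    (fun x => (τ • Λ - r₁ • g - r₀ • g : Lp ℝ 2 P) x) =ᵐ[P]
      fun x => τ * max a (min (Λ x) b) := by
  have hcoe : τ • Λ - r₁ • g - r₀ • g = τ • Λ - r • g := by rw [hr]; module
  rw [hcoe]
  filter_upwards [Lp.coeFn_sub (τ • Λ) (r • g), Lp.coeFn_smul τ Λ, Lp.coeFn_smul r g, hg]
    with x h₁ h₂ h₃ h₄
  rw [h₁, Pi.sub_apply, h₂, h₃, Pi.smul_apply, Pi.smul_apply, smul_eq_mul, smul_eq_mul, h₄,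
    ← sub_posPart_add_posPart_eq_clamp hab]
  field_simp
  ring

variable [IsFiniteMeasure P]

theorem L2.integrable_coeFn (f : Lp ℝ 2 P) : Integrable f P :=
  (Lp.memLp f).integrable one_le_two

theorem integral_abs_coeFn_add_le (f g : Lp ℝ 2 P) :
    ∫ x, |(f + g) x| ∂P ≤ ∫ x, |f x| ∂P + ∫ x, |g x| ∂P := by
  rw [← integral_add (L2.integrable_coeFn f).abs (L2.integrable_coeFn g).abs]
  refine integral_mono_ae (L2.integrable_coeFn (f + g)).abs
    ((L2.integrable_coeFn f).abs.add (L2.integrable_coeFn g).abs) ?_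
  filter_upwards [Lp.coeFn_add f g] with x hx
  rw [hx]
  exact abs_add_le _ _

theorem integral_abs_smul_add_smul_le {g₀ g₁ : Lp ℝ 2 P} (hg₀ : g₀ ∈ tvBall P)
    (hg₁ : g₁ ∈ tvBall P) {a b : ℝ} (ha : 0 ≤ a) (hb : 0 ≤ b) :
    ∫ x, |(a • g₀ + b • g₁) x| ∂P ≤ 2 * (a + b) := by
  calc ∫ x, |(a • g₀ + b • g₁) x| ∂P
      ≤ |a| * ∫ x, |g₀ x| ∂P + |b| * ∫ x, |g₁ x| ∂P := by
        simpa only [integral_abs_coeFn_smul] using integral_abs_coeFn_add_le (a • g₀) (b • g₁)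
    _ ≤ a * 2 + b * 2 := by
        rw [abs_of_nonneg ha, abs_of_nonneg hb]
        gcongr
        exacts [hg₀.2, hg₁.2]
    _ = 2 * (a + b) := by ring

theorem disjoint_smul_tvBall_add_smul_tvBall {Λ : Lp ℝ 2 P} {r₀ r₁ : ℝ} (h₀ : 0 ≤ r₀)
    (h₁ : 0 ≤ r₁) (hΛ : 2 * (r₀ + r₁) < ∫ x, |Λ x| ∂P) :
    Disjoint {h | ∃ g ∈ tvBall P, h = r₀ • g} {h | ∃ g ∈ tvBall P, h = Λ + r₁ • g} := by
  rw [Set.disjoint_left]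
  rintro _ ⟨g₀, hg₀, rfl⟩ ⟨g₁, hg₁, hΛg⟩
  have hΛ_eq : Λ = r₀ • g₀ + r₁ • -g₁ := by rw [hΛg]; module
  have := integral_abs_smul_add_smul_le hg₀ (neg_mem_tvBall hg₁) h₀ h₁
  rw [← hΛ_eq] at this
  linarith

theorem abs_inner_le_of_mem_tvBall {q u : Lp ℝ 2 P} {a b : ℝ} (hab : a ≤ b)
    (hq : ∀ᵐ x ∂P, q x ∈ Set.Icc a b) (hu : u ∈ tvBall P) : |⟪q, u⟫| ≤ b - a := by
  set c := (a + b) / 2 with hc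
  have hqc : Integrable (fun x => (q x - c) * u x) P :=
    ((L2.integrable_mul q u).sub ((L2.integrable_coeFn u).const_mul c)).congr
      (Filter.Eventually.of_forall fun x => (sub_mul _ _ _).symm)
  have hcentre : ⟪q, u⟫ = ∫ x, (q x - c) * u x ∂P := by
    simp only [sub_mul]
    rw [integral_sub (L2.integrable_mul q u) ((L2.integrable_coeFn u).const_mul c),
      integral_const_mul, hu.1, mul_zero, sub_zero, L2.inner_eq_integral_mul]
  have hbound : ∀ᵐ x ∂P, |(q x - c) * u x| ≤ (b - a) / 2 * |u x| := by
    filter_upwards [hq] with x hx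
    rw [abs_mul]
    gcongr
    rw [abs_le]
    constructor <;> linarith [hx.1, hx.2, hc]
  calc |⟪q, u⟫| ≤ ∫ x, |(q x - c) * u x| ∂P := by
        rw [hcentre]; exact abs_integral_le_integral_abs
    _ ≤ ∫ x, (b - a) / 2 * |u x| ∂P :=
        integral_mono_ae hqc.abs ((L2.integrable_coeFn u).abs.const_mul _) hbound
    _ = (b - a) / 2 * ∫ x, |u x| ∂P := integral_const_mul _ _
    _ ≤ (b - a) / 2 * 2 := mul_le_mul_of_nonneg_left hu.2 (by linarith)
    _ = b - a := by ring

theorem L2.integrable_posPart_sub_const (f : Lp ℝ 2 P) (c : ℝ) :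
    Integrable (fun x => max (f x - c) 0) P :=
  ((L2.integrable_coeFn f).sub (integrable_const c)).pos_part

theorem L2.integrable_posPart_const_sub (c : ℝ) (f : Lp ℝ 2 P) :
    Integrable (fun x => max (c - f x) 0) P :=
  ((integrable_const c).sub (L2.integrable_coeFn f)).pos_part

section PosPart

variable {Λ g q : Lp ℝ 2 P} {a b τ r : ℝ}

theorem mem_tvBall_of_ae_eq_posPart_sub_posPart (hab : a ≤ b) (hτ : 0 < τ) (hr : 0 < r)
    (ha : τ * ∫ x, max (a - Λ x) 0 ∂P = r) (hb : τ * ∫ x, max (Λ x - b) 0 ∂P = r)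
    (hg : (fun x => g x) =ᵐ[P] fun x => τ / r * (max (Λ x - b) 0 - max (a - Λ x) 0)) :
    g ∈ tvBall P := by
  have hb_int := L2.integrable_posPart_sub_const Λ b
  have ha_int := L2.integrable_posPart_const_sub a Λ
  have habs : (fun x => |g x|) =ᵐ[P]
      fun x => τ / r * (max (Λ x - b) 0 + max (a - Λ x) 0) := by
    filter_upwards [hg] with x hx
    rw [hx, abs_mul, abs_of_pos (div_pos hτ hr), abs_posPart_sub_posPart hab]
  constructor
  · rw [integral_congr_ae hg, integral_const_mul, integral_sub hb_int ha_int]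
    field_simp
    linarith
  · rw [integral_congr_ae habs, integral_const_mul, integral_add hb_int ha_int]
    field_simp
    linarith

theorem inner_eq_of_ae_eq_clamp (hab : a ≤ b) (hr : r ≠ 0)
    (ha : τ * ∫ x, max (a - Λ x) 0 ∂P = r) (hb : τ * ∫ x, max (Λ x - b) 0 ∂P = r)
    (hq : (fun x => q x) =ᵐ[P] fun x => τ * max a (min (Λ x) b))
    (hg : (fun x => g x) =ᵐ[P] fun x => τ / r * (max (Λ x - b) 0 - max (a - Λ x) 0)) :
    ⟪q, g⟫ = τ * (b - a) := by
  have hb_int := L2.integrable_posPart_sub_const Λ b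
  have ha_int := L2.integrable_posPart_const_sub a Λ
  have hqg : (fun x => q x * g x) =ᵐ[P]
      fun x => τ / r * (b * (τ * max (Λ x - b) 0) - a * (τ * max (a - Λ x) 0)) := by
    filter_upwards [hq, hg] with x hqx hgx
    rw [hqx, hgx, mul_mul_mul_comm, clamp_mul_posPart_sub_posPart hab]
    ring
  rw [L2.inner_eq_integral_mul, integral_congr_ae hqg, integral_const_mul,
    integral_sub ((hb_int.const_mul τ).const_mul b) ((ha_int.const_mul τ).const_mul a),
    integral_const_mul, integral_const_mul, integral_const_mul, integral_const_mul, ha, hb]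
  field_simp

end PosPart

end MeasureTheory

theorem tv_least_favorable_tangent_pair_general
    {Ω : Type*} [MeasurableSpace Ω] (P : Measure Ω) [IsProbabilityMeasure P]
    (Λ : Lp ℝ 2 P)
    (τ r₀ r₁ r : ℝ) (hτ : 0 < τ) (h₀ : 0 ≤ r₀) (h₁ : 0 ≤ r₁)
    (hr : r = r₀ + r₁) (hrpos : 0 < r)
    (hrad : 2 * r < τ * ∫ x, |Λ x| ∂P)
    (v' v'' : ℝ) (hv' : v' < 0) (hv'' : 0 < v'')
    (hv'eq : τ * (∫ x, max (v' - Λ x) 0 ∂P) = r)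
    (hv''eq : τ * (∫ x, max (Λ x - v'') 0 ∂P) = r)
    (Gv : Set (Lp ℝ 2 P))
    (hGv : Gv = {g : Lp ℝ 2 P | (∫ x, g x ∂P) = 0 ∧ (∫ x, |g x| ∂P) ≤ 2})
    (G₀ G₁ : Set (Lp ℝ 2 P))
    (hG₀ : G₀ = {h | ∃ g ∈ Gv, h = r₀ • g})
    (hG₁ : G₁ = {h | ∃ g ∈ Gv, h = τ • Λ + r₁ • g})
    (gt : Lp ℝ 2 P)
    (hgt : (fun x => gt x) =ᵐ[P]
      fun x => (τ / r) * (max (Λ x - v'') 0 - max (v' - Λ x) 0)) :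
    gt ∈ Gv ∧
    Disjoint G₀ G₁ ∧
    r₀ • gt ∈ G₀ ∧
    τ • Λ - r₁ • gt ∈ G₁ ∧
    (fun x => ((τ • Λ - r₁ • gt) - r₀ • gt : Lp ℝ 2 P) x) =ᵐ[P]
      (fun x => τ * max v' (min (Λ x) v'')) ∧
    ((τ • Λ - r₁ • gt) - r₀ • gt ∈
        {d : Lp ℝ 2 P | ∃ g₀ ∈ G₀, ∃ g₁ ∈ G₁, d = g₁ - g₀} ∧
      ∀ d ∈ {d : Lp ℝ 2 P | ∃ g₀ ∈ G₀, ∃ g₁ ∈ G₁, d = g₁ - g₀},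
        ‖(τ • Λ - r₁ • gt) - r₀ • gt‖ ≤ ‖d‖) := by
  obtain rfl : Gv = tvBall P := hGv
  subst hG₀ hG₁
  have hv : v' ≤ v'' := (hv'.trans hv'').le
  have hgt_mem : gt ∈ tvBall P :=
    mem_tvBall_of_ae_eq_posPart_sub_posPart hv hτ hrpos hv'eq hv''eq hgt
  have hq := coeFn_smul_sub_smul_sub_smul_ae_eq_clamp hv hr hrpos.ne' hgt
  have hmem₀ : r₀ • gt ∈ {h | ∃ g ∈ tvBall P, h = r₀ • g} := ⟨gt, hgt_mem, rfl⟩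
  have hmem₁ : τ • Λ - r₁ • gt ∈ {h | ∃ g ∈ tvBall P, h = τ • Λ + r₁ • g} :=
    ⟨-gt, neg_mem_tvBall hgt_mem, by rw [smul_neg, sub_eq_add_neg]⟩
  have hdisj := disjoint_smul_tvBall_add_smul_tvBall (Λ := τ • Λ) h₀ h₁ (by
    rwa [integral_abs_coeFn_smul, abs_of_pos hτ, ← hr])
  refine ⟨hgt_mem, hdisj, hmem₀, hmem₁, hq, ⟨_, hmem₀, _, hmem₁, rfl⟩, ?_⟩
  rintro _ ⟨_, ⟨u₀, hu₀, rfl⟩, _, ⟨u₁, hu₁, rfl⟩, rfl⟩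
  refine norm_sub_smul_sub_smul_le_of_abs_inner_le h₀ h₁ (fun u hu => ?_) hu₀ hu₁
  have hq_mem : ∀ᵐ x ∂P,
      ((τ • Λ - r₁ • gt) - r₀ • gt : Lp ℝ 2 P) x ∈ Set.Icc (τ * v') (τ * v'') := by
    filter_upwards [hq] with x hx
    rw [hx]
    exact ⟨by gcongr; exact le_max_left _ _, by gcongr; exact max_le hv (min_le_right _ _)⟩
  rw [inner_eq_of_ae_eq_clamp hv hrpos.ne' hv'eq hv''eq hq hgt, mul_sub]
  exact abs_inner_le_of_mem_tvBall (by gcongr) hq_mem hu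

/-- for the total variation hypotheses `G₀ = r₀G_v` and
`G₁ = τΛ + r₁G_v`, under `2r < τE[|Λ|]`, with
`g̃ = (τ/r)((Λ − v″)₊ − (v′ − Λ)₊)`, one has `g̃ ∈ G_v`, `G₀` and `G₁` are
disjoint, the pair `(r₀g̃, τΛ − r₁g̃)` lies in `G₀ × G₁`, and its difference
`τ(v′ ∨ Λ ∧ v″)` is the minimum-norm element of `G₁ − G₀`. -/
theorem tv_least_favorable_tangent_pair
    {Ω : Type*} [MeasurableSpace Ω] (P : Measure Ω) [IsProbabilityMeasure P]
    (Λ : Lp ℝ 2 P) (hcent : ∫ x, Λ x ∂P = 0)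
    (τ r₀ r₁ r : ℝ) (hτ : 0 < τ) (h₀ : 0 ≤ r₀) (h₁ : 0 ≤ r₁)
    (hr : r = r₀ + r₁) (hrpos : 0 < r)
    (hrad : 2 * r < τ * ∫ x, |Λ x| ∂P)
    (v' v'' : ℝ) (hv' : v' < 0) (hv'' : 0 < v'')
    (hv'eq : τ * (∫ x, max (v' - Λ x) 0 ∂P) = r)
    (hv''eq : τ * (∫ x, max (Λ x - v'') 0 ∂P) = r)
    (Gv : Set (Lp ℝ 2 P))
    (hGv : Gv = {g : Lp ℝ 2 P | (∫ x, g x ∂P) = 0 ∧ (∫ x, |g x| ∂P) ≤ 2})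
    (G₀ G₁ : Set (Lp ℝ 2 P))
    (hG₀ : G₀ = {h | ∃ g ∈ Gv, h = r₀ • g})
    (hG₁ : G₁ = {h | ∃ g ∈ Gv, h = τ • Λ + r₁ • g})
    (gt : Lp ℝ 2 P)
    (hgt : (fun x => gt x) =ᵐ[P]
      fun x => (τ / r) * (max (Λ x - v'') 0 - max (v' - Λ x) 0)) :
    gt ∈ Gv ∧
    Disjoint G₀ G₁ ∧
    r₀ • gt ∈ G₀ ∧
    τ • Λ - r₁ • gt ∈ G₁ ∧
    (fun x => ((τ • Λ - r₁ • gt) - r₀ • gt : Lp ℝ 2 P) x) =ᵐ[P]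
      (fun x => τ * max v' (min (Λ x) v'')) ∧
    ((τ • Λ - r₁ • gt) - r₀ • gt ∈
        {d : Lp ℝ 2 P | ∃ g₀ ∈ G₀, ∃ g₁ ∈ G₁, d = g₁ - g₀} ∧
      ∀ d ∈ {d : Lp ℝ 2 P | ∃ g₀ ∈ G₀, ∃ g₁ ∈ G₁, d = g₁ - g₀},
        ‖(τ • Λ - r₁ • gt) - r₀ • gt‖ ≤ ‖d‖) :=
  tv_least_favorable_tangent_pair_general P Λ τ r₀ r₁ r hτ h₀ h₁ hr hrpos hrad v' v'' hv' hv'' hv'eq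
    hv''eq Gv hGv G₀ G₁ hG₀ hG₁ gt hgt
end

section
/- Let (Ω, 𝔄, P) be a probability space and r₀, r₁ ≥ 0, and let G_c = {g ∈ L²(P) : E[g] = 0, g ≥ −1 P-a.e.} be the normed contamination ball. Then the set of differences r₁G_c − r₀G_c = {r₁g₁ − r₀g₀ : g₀, g₁ ∈ G_c} equals {h ∈ L²(P) : E[h] = 0, E[(h + (r₁ − r₀))₊] ≤ r₁, E[(h + (r₁ − r₀))₋] ≤ r₀}. In particular, for r₀ = r₁ = r, the set rG_c − rG_c equals {h ∈ L²(P) : E[h] = 0, E[|h|] ≤ 2r}. -/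
/-!
Write `h + (r₁ - r₀) = (u + r₁) - (v + r₀)` with `u ∈ r₁G_c`, `v ∈ r₀G_c`: both brackets are
nonnegative with means `r₁` and `r₀`, so they dominate the positive and the negative part of
`h + (r₁ - r₀)`. Conversely, `f = h + (r₁ - r₀)` has mean `r₁ - r₀`, and the centred parts
`u = f₊ - E[f₊]`, `v = f₋ - E[f₋]` satisfy `u - v = f - E[f] = h`, `u ≥ -E[f₊] ≥ -r₁` and
`v ≥ -E[f₋] ≥ -r₀`. Since `rG_c = {f : E[f] = 0, f ≥ -r}` (for `r = 0` both sides are `{0}`),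
this is the claim. For `r₀ = r₁` and `E[h] = 0` one has `E[h₊] = E[h₋] = E[|h|] / 2`.
-/

open MeasureTheory Pointwise

section

variable {Ω : Type*} [MeasurableSpace Ω] {P : Measure Ω}

def contaminationBall (P : Measure Ω) : Set (Lp ℝ 2 P) :=
  {g | ∫ x, g x ∂P = 0 ∧ ∀ᵐ x ∂P, -1 ≤ g x}

lemma L2.integrable_coeFn [IsFiniteMeasure P] (f : Lp ℝ 2 P) : Integrable f P :=
  (Lp.memLp f).integrable one_le_two

lemma Lp.integral_coeFn_smul {p} (c : ℝ) (f : Lp ℝ p P) :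
    ∫ x, (c • f) x ∂P = c * ∫ x, f x ∂P := by
  rw [integral_congr_ae (Lp.coeFn_smul c f)]
  exact integral_const_mul c _

lemma L2.integral_coeFn_sub [IsFiniteMeasure P] (f g : Lp ℝ 2 P) :
    ∫ x, (f - g) x ∂P = ∫ x, f x ∂P - ∫ x, g x ∂P := by
  rw [integral_congr_ae (Lp.coeFn_sub f g)]
  exact integral_sub (L2.integrable_coeFn f) (L2.integrable_coeFn g)

theorem smul_contaminationBall [IsFiniteMeasure P] {r : ℝ} (hr : 0 ≤ r) :
    r • contaminationBall P = {f | ∫ x, f x ∂P = 0 ∧ ∀ᵐ x ∂P, -r ≤ f x} := by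
  ext f
  simp only [Set.mem_smul_set, contaminationBall, Set.mem_ofPred_eq]
  constructor
  · rintro ⟨g, ⟨hg_int, hg_ge⟩, rfl⟩
    refine ⟨by rw [Lp.integral_coeFn_smul, hg_int, mul_zero], ?_⟩
    filter_upwards [Lp.coeFn_smul r g, hg_ge] with x hx hgx
    rw [hx, Pi.smul_apply, smul_eq_mul]
    nlinarith
  · rintro ⟨hf_int, hf_ge⟩
    rcases hr.eq_or_lt with rfl | hr_pos
    · have hf_zero : (f : Ω → ℝ) =ᵐ[P] 0 := by
        rwa [← integral_eq_zero_iff_of_nonneg_ae (by simpa [Filter.EventuallyLE] using hf_ge) (L2.integrable_coeFn f)]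
      refine ⟨0, ⟨?_, ?_⟩, ?_⟩
      · rw [integral_congr_ae (Lp.coeFn_zero ℝ 2 P)]
        exact integral_zero Ω ℝ
      · filter_upwards [Lp.coeFn_zero ℝ 2 P] with x hx
        rw [hx, Pi.zero_apply]
        norm_num
      · rw [zero_smul, eq_comm]
        exact Lp.eq_zero_iff_ae_eq_zero.2 hf_zero
    · refine ⟨r⁻¹ • f, ⟨by rw [Lp.integral_coeFn_smul, hf_int, mul_zero], ?_⟩,
        smul_inv_smul₀ hr_pos.ne' f⟩
      filter_upwards [Lp.coeFn_smul r⁻¹ f, hf_ge] with x hx hfx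
      rw [hx, Pi.smul_apply, smul_eq_mul, le_inv_mul_iff₀ hr_pos]
      linarith

lemma integral_max_sub_add_le [IsProbabilityMeasure P] {u v : Ω → ℝ} {a b : ℝ}
    (hu : Integrable u P) (hu_int : ∫ x, u x ∂P = 0) (hu_ge : ∀ᵐ x ∂P, -a ≤ u x)
    (hv_ge : ∀ᵐ x ∂P, -b ≤ v x) :
    ∫ x, max (u x - v x + (a - b)) 0 ∂P ≤ a :=
  calc ∫ x, max (u x - v x + (a - b)) 0 ∂P
      ≤ ∫ x, (u x + a) ∂P := by
        refine integral_mono_of_nonneg (ae_of_all _ fun x => le_max_right _ _)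
          (hu.add (integrable_const a)) ?_
        filter_upwards [hu_ge, hv_ge] with x hux hvx
        exact max_le (by linarith) (by linarith)
    _ = a := by
        rw [integral_add hu (integrable_const a), hu_int, integral_const]
        simp

noncomputable def centeredLp [IsFiniteMeasure P] {f : Ω → ℝ} (hf : MemLp f 2 P) : Lp ℝ 2 P :=
  (hf.sub (memLp_const (∫ x, f x ∂P))).toLp _

section centeredLp

variable [IsFiniteMeasure P] {f : Ω → ℝ} (hf : MemLp f 2 P)

lemma coeFn_centeredLp : centeredLp hf =ᵐ[P] fun x => f x - ∫ y, f y ∂P :=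
  MemLp.coeFn_toLp _

lemma integral_centeredLp [IsProbabilityMeasure P] : ∫ x, centeredLp hf x ∂P = 0 := by
  rw [integral_congr_ae (coeFn_centeredLp hf),
    integral_sub (hf.integrable one_le_two) (integrable_const _), integral_const]
  simp

lemma neg_integral_le_centeredLp (hf_nonneg : 0 ≤ᵐ[P] f) :
    ∀ᵐ x ∂P, -∫ y, f y ∂P ≤ centeredLp hf x := by
  filter_upwards [coeFn_centeredLp hf, hf_nonneg] with x hx hfx
  rw [hx]
  simpa using hfx

end centeredLp

lemma centeredLp_posPart_sub_centeredLp_negPart [IsProbabilityMeasure P] {h : Lp ℝ 2 P}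
    (hh : ∫ x, h x ∂P = 0) {c : ℝ} (hf : MemLp (fun x => h x + c) 2 P) :
    centeredLp hf.pos_part - centeredLp hf.neg_part = h := by
  have h_parts : ∫ x, max (h x + c) 0 ∂P - ∫ x, max (-(h x + c)) 0 ∂P = c := by
    have hf_int := hf.integrable one_le_two
    rw [← integral_sub hf_int.pos_part hf_int.neg_part]
    simp only [max_zero_sub_max_neg_zero_eq_self]
    rw [integral_add (L2.integrable_coeFn h) (integrable_const c), hh, integral_const]
    simp
  apply Lp.ext
  filter_upwards [Lp.coeFn_sub (centeredLp hf.pos_part) (centeredLp hf.neg_part),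
    coeFn_centeredLp hf.pos_part, coeFn_centeredLp hf.neg_part] with x hx hpos hneg
  rw [hx, Pi.sub_apply, hpos, hneg]
  have := max_zero_sub_max_neg_zero_eq_self (h x + c)
  linarith

theorem smul_contaminationBall_sub_smul_contaminationBall [IsProbabilityMeasure P] {r₀ r₁ : ℝ}
    (hr₀ : 0 ≤ r₀) (hr₁ : 0 ≤ r₁) :
    r₁ • contaminationBall P - r₀ • contaminationBall P =
      {h | ∫ x, h x ∂P = 0 ∧ ∫ x, max (h x + (r₁ - r₀)) 0 ∂P ≤ r₁ ∧
        ∫ x, max (-(h x + (r₁ - r₀))) 0 ∂P ≤ r₀} := by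
  rw [smul_contaminationBall hr₁, smul_contaminationBall hr₀]
  ext h
  constructor
  · rintro ⟨u, ⟨hu_int, hu_ge⟩, v, ⟨hv_int, hv_ge⟩, rfl⟩
    have hsub := Lp.coeFn_sub u v
    refine ⟨by rw [L2.integral_coeFn_sub, hu_int, hv_int, sub_zero], ?_, ?_⟩
    · rw [integral_congr_ae (hsub.mono fun x hx => by rw [hx, Pi.sub_apply])]
      exact integral_max_sub_add_le (L2.integrable_coeFn u) hu_int hu_ge hv_ge
    · rw [integral_congr_ae (hsub.mono fun x hx =>
        show _ = max (v x - u x + (r₀ - r₁)) 0 by rw [hx, Pi.sub_apply]; ring_nf)]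
      exact integral_max_sub_add_le (L2.integrable_coeFn v) hv_int hv_ge hu_ge
  · rintro ⟨hh, h_pos, h_neg⟩
    have hf : MemLp (fun x => h x + (r₁ - r₀)) 2 P := (Lp.memLp h).add (memLp_const _)
    refine ⟨_, ⟨integral_centeredLp hf.pos_part, ?_⟩, _, ⟨integral_centeredLp hf.neg_part, ?_⟩,
      centeredLp_posPart_sub_centeredLp_negPart hh hf⟩
    · filter_upwards [neg_integral_le_centeredLp hf.pos_part
        (ae_of_all _ fun x => le_max_right _ _)] with x hx
      linarith
    · filter_upwards [neg_integral_le_centeredLp hf.neg_part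
        (ae_of_all _ fun x => le_max_right _ _)] with x hx
      linarith

theorem smul_contaminationBall_sub_self [IsProbabilityMeasure P] {r : ℝ} (hr : 0 ≤ r) :
    r • contaminationBall P - r • contaminationBall P =
      {h | ∫ x, h x ∂P = 0 ∧ ∫ x, |h x| ∂P ≤ 2 * r} := by
  rw [smul_contaminationBall_sub_smul_contaminationBall hr hr]
  ext h
  simp only [Set.mem_ofPred_eq, sub_self, add_zero]
  refine and_congr_right fun hh => ?_
  have h_pos := integral_abs_eq_two_mul_integral_posPart_sub_integral (L2.integrable_coeFn h)
  have h_neg := integral_abs_eq_two_mul_integral_negPart_add_integral (L2.integrable_coeFn h)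
  simp only [PosPart.posPart, NegPart.negPart, hh] at h_pos h_neg
  constructor
  · rintro ⟨-, h_neg_le⟩
    linarith
  · intro habs
    constructor <;> linarith

end

lemma setOf_exists_eq_smul_sub_smul {α M : Type*} [SMul α M] [Sub M] (S : Set M) (a b : α) :
    {h | ∃ g₀ ∈ S, ∃ g₁ ∈ S, h = a • g₁ - b • g₀} = a • S - b • S := by
  ext h
  simp only [Set.mem_sub, Set.mem_smul_set]
  constructor
  · rintro ⟨g₀, hg₀, g₁, hg₁, rfl⟩
    exact ⟨_, ⟨g₁, hg₁, rfl⟩, _, ⟨g₀, hg₀, rfl⟩, rfl⟩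
  · rintro ⟨_, ⟨g₁, hg₁, rfl⟩, _, ⟨g₀, hg₀, rfl⟩, rfl⟩
    exact ⟨g₀, hg₀, g₁, hg₁, rfl⟩

/-- the set of differences `r₁G_c − r₀G_c` of scaled normed
contamination balls equals
`{h ∈ L²(P) : E[h] = 0, E[(h + (r₁−r₀))₊] ≤ r₁, E[(h + (r₁−r₀))₋] ≤ r₀}`;
in particular for `r₀ = r₁` it is the centered total variation ball
`{h : E[h] = 0, E[|h|] ≤ 2r₀}`. -/
theorem contamination_difference_set_eq
    {Ω : Type*} [MeasurableSpace Ω] (P : Measure Ω) [IsProbabilityMeasure P]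
    (r₀ r₁ : ℝ) (h₀ : 0 ≤ r₀) (h₁ : 0 ≤ r₁)
    (Gc : Set (Lp ℝ 2 P))
    (hGc : Gc = {g : Lp ℝ 2 P | (∫ x, g x ∂P) = 0 ∧ ∀ᵐ x ∂P, -1 ≤ g x}) :
    {h : Lp ℝ 2 P | ∃ g₀ ∈ Gc, ∃ g₁ ∈ Gc, h = r₁ • g₁ - r₀ • g₀} =
      {h : Lp ℝ 2 P | (∫ x, h x ∂P) = 0 ∧
        (∫ x, max (h x + (r₁ - r₀)) 0 ∂P) ≤ r₁ ∧
        (∫ x, max (-(h x + (r₁ - r₀))) 0 ∂P) ≤ r₀} ∧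
    (r₀ = r₁ →
      {h : Lp ℝ 2 P | ∃ g₀ ∈ Gc, ∃ g₁ ∈ Gc, h = r₀ • g₁ - r₀ • g₀} =
        {h : Lp ℝ 2 P | (∫ x, h x ∂P) = 0 ∧ (∫ x, |h x| ∂P) ≤ 2 * r₀}) := by
  have hGc' : Gc = contaminationBall P := hGc
  subst hGc'
  simp only [setOf_exists_eq_smul_sub_smul]
  exact ⟨smul_contaminationBall_sub_smul_contaminationBall h₀ h₁,
    fun _ => smul_contaminationBall_sub_self h₀⟩
end

section
/- Let (Ω, 𝔄, P) be a probability space, Λ ∈ L²(P) with E[Λ] = 0, τ > 0, r₀, r₁ > 0, r = r₀ + r₁, and 2r < τE[|Λ|]. Let v′ < 0 < v″ be the unique reals with τE[(v′ − Λ)₊] = r = τE[(Λ − v″)₊]. Then for any h₀, h₁ ∈ L²(P) with E[h_i] = 0 and E[|h_i|] ≤ 2 (i = 0, 1), the identity r₀h₀ + r₁h₁ = τ(Λ − v″)₊ − τ(v′ − Λ)₊ (P-a.e.) holds if and only if both r₀h₀⁺ + r₁h₁⁺ = τ(Λ − v″)₊ P-a.e. and r₀h₀⁻ + r₁h₁⁻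 = τ(v′ − Λ)₊ P-a.e. -/
open MeasureTheory

/-!
Since `v' < v''`, the targets `τ(Λ − v'')₊` and `τ(v' − Λ)₊` have disjoint supports, so if
`r₀h₀ + r₁h₁` equals their difference, each of them is dominated pointwise by the corresponding
combination `r₀h₀^± + r₁h₁^±`. Both targets integrate to `r`, while the two dominating
combinations together integrate to `r₀E|h₀| + r₁E|h₁| ≤ 2r`; hence all these inequalities are
equalities a.e.
-/

lemma le_and_le_of_sub_eq_sub {a b u w : ℝ} (hab : a = 0 ∨ b = 0) (hu : 0 ≤ u) (hw : 0 ≤ w)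
    (h : a - b = u - w) : a ≤ u ∧ b ≤ w := by
  rcases hab with rfl | rfl <;> constructor <;> linarith

lemma max_sub_zero_eq_zero_or_max_sub_zero_eq_zero {v' v'' : ℝ} (hv : v' ≤ v'') (x : ℝ) :
    max (x - v'') 0 = 0 ∨ max (v' - x) 0 = 0 := by
  rcases le_total x v'' with h | h
  · exact .inl (max_eq_right (by linarith))
  · exact .inr (max_eq_right (by linarith))

namespace MeasureTheory

variable {α : Type*} [MeasurableSpace α] {μ : Measure α}

lemma ae_eq_and_ae_eq_of_ae_le_of_integral_add_le {f₁ f₂ g₁ g₂ : α → ℝ}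
    (hf₁ : Integrable f₁ μ) (hf₂ : Integrable f₂ μ) (hg₁ : Integrable g₁ μ)
    (hg₂ : Integrable g₂ μ) (h₁ : f₁ ≤ᵐ[μ] g₁) (h₂ : f₂ ≤ᵐ[μ] g₂)
    (h : ∫ x, g₁ x ∂μ + ∫ x, g₂ x ∂μ ≤ ∫ x, f₁ x ∂μ + ∫ x, f₂ x ∂μ) :
    f₁ =ᵐ[μ] g₁ ∧ f₂ =ᵐ[μ] g₂ := by
  have i₁ := integral_mono_ae hf₁ hg₁ h₁
  have i₂ := integral_mono_ae hf₂ hg₂ h₂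
  exact ⟨(integral_eq_iff_of_ae_le hf₁ hg₁ h₁).1 (by linarith),
    (integral_eq_iff_of_ae_le hf₂ hg₂ h₂).1 (by linarith)⟩

lemma integral_max_zero_add_integral_max_neg_zero {f : α → ℝ} (hf : Integrable f μ) :
    ∫ x, max (f x) 0 ∂μ + ∫ x, max (-f x) 0 ∂μ = ∫ x, |f x| ∂μ := by
  have hf' : Integrable (fun x => max (-f x) 0) μ := hf.neg.pos_part
  rw [← integral_add hf.pos_part hf']
  simp_rw [max_zero_add_max_neg_zero_eq_abs_self]

lemma integral_mul_max_zero_add_integral_mul_max_neg_zero {f g : α → ℝ}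
    (hf : Integrable f μ) (hg : Integrable g μ) (a b : ℝ) :
    ∫ x, a * max (f x) 0 + b * max (g x) 0 ∂μ + ∫ x, a * max (-f x) 0 + b * max (-g x) 0 ∂μ =
      a * ∫ x, |f x| ∂μ + b * ∫ x, |g x| ∂μ := by
  have hf' : Integrable (fun x => max (-f x) 0) μ := hf.neg.pos_part
  have hg' : Integrable (fun x => max (-g x) 0) μ := hg.neg.pos_part
  rw [integral_add (hf.pos_part.const_mul a) (hg.pos_part.const_mul b),
    integral_add (hf'.const_mul a) (hg'.const_mul b),
    integral_const_mul, integral_const_mul, integral_const_mul, integral_const_mul,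
    ← integral_max_zero_add_integral_max_neg_zero hf,
    ← integral_max_zero_add_integral_max_neg_zero hg]
  ring

end MeasureTheory

theorem tv_least_favorable_pairs_characterization_general
    {Ω : Type*} [MeasurableSpace Ω] (P : Measure Ω) [IsProbabilityMeasure P]
    (Λ : Ω → ℝ) (hΛ : MemLp Λ 2 P)
    (τ r₀ r₁ r : ℝ) (h₀ : 0 < r₀) (h₁ : 0 < r₁)
    (hr : r = r₀ + r₁)
    (v' v'' : ℝ) (hv' : v' < 0) (hv'' : 0 < v'')
    (hv'eq : τ * (∫ x, max (v' - Λ x) 0 ∂P) = r)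
    (hv''eq : τ * (∫ x, max (Λ x - v'') 0 ∂P) = r)
    (h₀f h₁f : Ω → ℝ)
    (hm₀ : MemLp h₀f 2 P) (hm₁ : MemLp h₁f 2 P)
    (hb₀ : (∫ x, |h₀f x| ∂P) ≤ 2) (hb₁ : (∫ x, |h₁f x| ∂P) ≤ 2) :
    ((fun x => r₀ * h₀f x + r₁ * h₁f x) =ᵐ[P]
        (fun x => τ * max (Λ x - v'') 0 - τ * max (v' - Λ x) 0)) ↔
      (((fun x => r₀ * max (h₀f x) 0 + r₁ * max (h₁f x) 0) =ᵐ[P]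
          fun x => τ * max (Λ x - v'') 0) ∧
        ((fun x => r₀ * max (-h₀f x) 0 + r₁ * max (-h₁f x) 0) =ᵐ[P]
          fun x => τ * max (v' - Λ x) 0)) := by
  have hΛi := hΛ.integrable one_le_two
  have hi₀ := hm₀.integrable one_le_two
  have hi₁ := hm₁.integrable one_le_two
  have hsplit (x : ℝ) := max_zero_sub_max_neg_zero_eq_self x
  refine ⟨fun heq => ?_, fun ⟨hpos, hneg⟩ => ?_⟩
  · have hle : ∀ᵐ x ∂P,
        τ * max (Λ x - v'') 0 ≤ r₀ * max (h₀f x) 0 + r₁ * max (h₁f x) 0 ∧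
          τ * max (v' - Λ x) 0 ≤ r₀ * max (-h₀f x) 0 + r₁ * max (-h₁f x) 0 := by
      filter_upwards [heq] with x hx
      refine le_and_le_of_sub_eq_sub ?_ (by positivity) (by positivity) ?_
      · rcases max_sub_zero_eq_zero_or_max_sub_zero_eq_zero (hv'.trans hv'').le (Λ x)
          with h | h <;> simp [h]
      · linear_combination -hx - r₀ * hsplit (h₀f x) - r₁ * hsplit (h₁f x)
    have hmass := integral_mul_max_zero_add_integral_mul_max_neg_zero hi₀ hi₁ r₀ r₁
    refine (ae_eq_and_ae_eq_of_ae_le_of_integral_add_le (by fun_prop) (by fun_prop)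
      (by fun_prop) (by fun_prop) (hle.mono fun _ => And.left) (hle.mono fun _ => And.right)
      ?_).imp Filter.EventuallyEq.symm Filter.EventuallyEq.symm
    rw [hmass, integral_const_mul, integral_const_mul, hv'eq, hv''eq]
    nlinarith
  · filter_upwards [hpos, hneg] with x hp hn
    linear_combination hp - hn - r₀ * hsplit (h₀f x) - r₁ * hsplit (h₁f x)

/-- characterization of all least favorable tangent pairs for
total variation: for `h₀, h₁` in the normed total variation ball, the identity
`r₀h₀ + r₁h₁ = τ(Λ − v″)₊ − τ(v′ − Λ)₊` a.e. holds iff the positive and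
negative parts match: `r₀h₀⁺ + r₁h₁⁺ = τ(Λ − v″)₊` and
`r₀h₀⁻ + r₁h₁⁻ = τ(v′ − Λ)₊` a.e. -/
theorem tv_least_favorable_pairs_characterization
    {Ω : Type*} [MeasurableSpace Ω] (P : Measure Ω) [IsProbabilityMeasure P]
    (Λ : Ω → ℝ) (hΛ : MemLp Λ 2 P) (hcent : ∫ x, Λ x ∂P = 0)
    (τ r₀ r₁ r : ℝ) (hτ : 0 < τ) (h₀ : 0 < r₀) (h₁ : 0 < r₁)
    (hr : r = r₀ + r₁) (hrad : 2 * r < τ * ∫ x, |Λ x| ∂P)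
    (v' v'' : ℝ) (hv' : v' < 0) (hv'' : 0 < v'')
    (hv'eq : τ * (∫ x, max (v' - Λ x) 0 ∂P) = r)
    (hv''eq : τ * (∫ x, max (Λ x - v'') 0 ∂P) = r)
    (h₀f h₁f : Ω → ℝ)
    (hm₀ : MemLp h₀f 2 P) (hm₁ : MemLp h₁f 2 P)
    (hc₀ : ∫ x, h₀f x ∂P = 0) (hc₁ : ∫ x, h₁f x ∂P = 0)
    (hb₀ : (∫ x, |h₀f x| ∂P) ≤ 2) (hb₁ : (∫ x, |h₁f x| ∂P) ≤ 2) :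
    ((fun x => r₀ * h₀f x + r₁ * h₁f x) =ᵐ[P]
        (fun x => τ * max (Λ x - v'') 0 - τ * max (v' - Λ x) 0)) ↔
      (((fun x => r₀ * max (h₀f x) 0 + r₁ * max (h₁f x) 0) =ᵐ[P]
          fun x => τ * max (Λ x - v'') 0) ∧
        ((fun x => r₀ * max (-h₀f x) 0 + r₁ * max (-h₁f x) 0) =ᵐ[P]
          fun x => τ * max (v' - Λ x) 0)) :=
  tv_least_favorable_pairs_characterization_general P Λ hΛ τ r₀ r₁ r h₀ h₁ hr v' v'' hv' hv'' hv'eq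
    hv''eq h₀f h₁f hm₀ hm₁ hb₀ hb₁
end
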